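/- arXiv:2309.04892 — 10 statements merged into one kernel-verified Lean document; each statement's English description precedes it below -/
import Mathlib

section
/- Let G be a simple graph on n vertices with real adjacency matrix A whose walk matrix W_G is invertible. If P is an n×n permutation matrix commuting with A (i.e., PA = AP), then P is the identity matrix. Consequently, the automorphism group of a controllable graph is trivial. -/
/-!
A permutation matrix `P` fixes `𝟙`; if it also commutes with `A`, it fixes every column `Aᵏ𝟙`
of the walk matrix `W`, so `P W = W`, and cancelling the invertible `W` gives `P = 1`. The
permutation matrix of an automorphism commutes with `A`, so the automorphism is trivial.
-/

open Matrix

/-- The walk matrix of a graph with adjacency matrix `A` on `n` vertices. -/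
noncomputable def walkMatrix {n : ℕ} (A : Matrix (Fin n) (Fin n) ℝ) :
    Matrix (Fin n) (Fin n) ℝ :=
  Matrix.of fun i j => ((A ^ (j : ℕ)) *ᵥ (1 : Fin n → ℝ)) i

theorem mul_walkMatrix_of_commute {n : ℕ} {A P : Matrix (Fin n) (Fin n) ℝ} (hPA : Commute P A)
    (hP : P *ᵥ 1 = 1) : P * walkMatrix A = walkMatrix A := by
  ext i j
  change (P *ᵥ (A ^ (j : ℕ) *ᵥ 1)) i = (A ^ (j : ℕ) *ᵥ 1) i
  rw [mulVec_mulVec, (hPA.pow_right j).eq, ← mulVec_mulVec, hP]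

theorem eq_one_of_commute_of_mulVec_one {n : ℕ} {A P : Matrix (Fin n) (Fin n) ℝ}
    (hctrl : IsUnit (walkMatrix A)) (hPA : Commute P A) (hP : P *ᵥ 1 = 1) : P = 1 :=
  hctrl.mul_right_cancel (by rw [mul_walkMatrix_of_commute hPA hP, one_mul])

theorem Equiv.Perm.permMatrix_mulVec_one {V R : Type*} [Fintype V] [DecidableEq V] [CommRing R]
    (σ : Equiv.Perm V) : σ.permMatrix R *ᵥ 1 = 1 := by
  rw [permMatrix_mulVec, Pi.one_comp]

theorem Equiv.Perm.eq_one_of_permMatrix_eq_one {V R : Type*} [DecidableEq V] [Zero R] [One R]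
    [NeZero (1 : R)] {σ : Equiv.Perm V} (h : σ.permMatrix R = 1) : σ = 1 := by
  ext v
  simpa [Matrix.one_apply, eq_comm] using congr_fun₂ h v (σ v)

theorem SimpleGraph.Iso.commute_permMatrix_adjMatrix {V R : Type*} [Fintype V] [DecidableEq V]
    [NonAssocSemiring R] {G : SimpleGraph V} [DecidableRel G.Adj] (φ : G ≃g G) :
    Commute (Equiv.Perm.permMatrix R φ.toEquiv) (G.adjMatrix R) := by
  rw [Commute, SemiconjBy, PEquiv.toMatrix_toPEquiv_mul, PEquiv.mul_toMatrix_toPEquiv]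
  ext i j
  have hadj : G.Adj (φ i) j ↔ G.Adj i (φ.symm j) := by
    simpa using φ.map_adj_iff (v := i) (w := φ.symm j)
  simp only [submatrix_apply, id, adjMatrix_apply]
  exact if_congr hadj rfl rfl

/-- If the walk matrix of `G` is invertible (i.e. `G` is controllable), then every
permutation matrix commuting with the adjacency matrix is the identity; consequently
every automorphism of `G` is the identity. -/
theorem controllable_trivial_automorphisms {n : ℕ}
    (G : SimpleGraph (Fin n)) [DecidableRel G.Adj]
    (hctrl : IsUnit (walkMatrix (G.adjMatrix ℝ))) :
    (∀ P : Matrix (Fin n) (Fin n) ℝ, (∃ σ : Equiv.Perm (Fin n), P = σ.permMatrix ℝ) →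
      P * G.adjMatrix ℝ = G.adjMatrix ℝ * P → P = 1) ∧
    (∀ φ : G ≃g G, ∀ v : Fin n, φ v = v) := by
  refine ⟨?_, fun φ v => ?_⟩
  · rintro P ⟨σ, rfl⟩ hcomm
    exact eq_one_of_commute_of_mulVec_one hctrl hcomm σ.permMatrix_mulVec_one
  · have hφ : φ.toEquiv = 1 :=
      Equiv.Perm.eq_one_of_permMatrix_eq_one (R := ℝ) <| eq_one_of_commute_of_mulVec_one hctrl
        φ.commute_permMatrix_adjMatrix (Equiv.Perm.permMatrix_mulVec_one _)
    exact DFunLike.congr_fun hφ v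
end

section
/- Let G and H be controllable simple graphs on n vertices with real adjacency matrices A and B. Then G and H are walk-equivalent (𝟙ᵀAʳ𝟙 = 𝟙ᵀBʳ𝟙 for every r ≥ 0) if and only if G and H are generalized cospectral (the characteristic polynomials of A + sJ and B + sJ coincide for every real s, where J is the all-ones matrix). -/
/-!
If `W_G` is invertible and `G`, `H` are walk-equivalent, then `W_Gᵀ A^k W_G = W_Hᵀ B^k W_H` for
`k = 0, 1`, since both sides are Hankel matrices of walk counts. Hence `Q = W_H W_G⁻¹` is
orthogonal with `Qᵀ B Q = A` and `Qᵀ 𝟙 = 𝟙`, so `Qᵀ (B + sJ) Q = A + sJ`.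

Conversely, symmetric matrices with equal characteristic polynomials have equal power traces, so
`tr (A + sJ)^(k+1) = tr (B + sJ)^(k+1)` for all `s`. Telescoping `x^(k+1) - y^(k+1)` (without
commutativity) writes `tr (A + sJ)^(k+1) - tr A^(k+1)` as `s · g(s)` with `g` continuous, and
`g(0) = (k+1) 𝟙ᵀ A^k 𝟙`; so these walk counts are determined by continuity at `s = 0`.
-/

open Matrix

/-- The all-ones matrix `J`. -/
def allOnes (n : ℕ) : Matrix (Fin n) (Fin n) ℝ := Matrix.of fun _ _ => 1

theorem pow_sub_pow_eq_sum_pow_mul_sub_mul_pow {R : Type*} [Ring R] (x y : R) (n : ℕ) :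
    x ^ n - y ^ n = ∑ i ∈ Finset.range n, x ^ i * (x - y) * y ^ (n - 1 - i) := by
  induction n with
  | zero => simp
  | succ n ih =>
    have hsplit : x ^ (n + 1) - y ^ (n + 1) = (x ^ n - y ^ n) * y + x ^ n * (x - y) := by
      rw [pow_succ, pow_succ]; noncomm_ring
    rw [hsplit, ih, Finset.sum_mul, Finset.sum_range_succ, Nat.add_sub_cancel, Nat.sub_self,
      pow_zero, mul_one]
    congr 1
    refine Finset.sum_congr rfl fun i hi => ?_
    have := Finset.mem_range.mp hi
    rw [mul_assoc _ _ y, ← pow_succ]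
    congr 2
    omega

section

variable {m : Type*} [Fintype m] [DecidableEq m]

theorem Matrix.charpoly_add_smul_vecMulVec_eq_of_transpose_mul_eq {R : Type*} [CommRing R]
    {W V A B : Matrix m m R} (v : m → R) (hW : IsUnit W) (hgram : Wᵀ * W = Vᵀ * V)
    (hconj : Wᵀ * A * W = Vᵀ * B * V) (hv : Wᵀ *ᵥ v = Vᵀ *ᵥ v) (s : R) :
    (A + s • vecMulVec v v).charpoly = (B + s • vecMulVec v v).charpoly := by
  have hWd : IsUnit W.det := (isUnit_iff_isUnit_det W).mp hW
  have hWtd : IsUnit Wᵀ.det := by rwa [det_transpose]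
  set Q := V * W⁻¹ with hQ
  have hQt : Qᵀ = Wᵀ⁻¹ * Vᵀ := by rw [transpose_mul, transpose_nonsing_inv]
  have hsandwich : ∀ M N : Matrix m m R, Wᵀ * M * W = Vᵀ * N * V → Qᵀ * N * Q = M := by
    intro M N hMN
    calc Qᵀ * N * Q = Wᵀ⁻¹ * (Vᵀ * N * V) * W⁻¹ := by rw [hQt, hQ]; simp only [Matrix.mul_assoc]
      _ = (Wᵀ⁻¹ * Wᵀ) * M * (W * W⁻¹) := by rw [← hMN]; simp only [Matrix.mul_assoc]
      _ = M := by rw [nonsing_inv_mul _ hWtd, mul_nonsing_inv _ hWd, Matrix.one_mul, Matrix.mul_one]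
  have horth : Qᵀ * Q = 1 := by simpa using hsandwich 1 1 (by simpa using hgram)
  have hQv : v ᵥ* Q = v := by
    rw [← mulVec_transpose, hQt, ← mulVec_mulVec, ← hv, mulVec_mulVec, nonsing_inv_mul _ hWtd,
      one_mulVec]
  have hJ : Qᵀ * vecMulVec v v * Q = vecMulVec v v := by
    rw [mul_vecMulVec, vecMulVec_mul, mulVec_transpose, hQv]
  calc (A + s • vecMulVec v v).charpoly = (Qᵀ * ((B + s • vecMulVec v v) * Q)).charpoly := by
        rw [← Matrix.mul_assoc, Matrix.mul_add, Matrix.add_mul, Matrix.mul_smul, Matrix.smul_mul,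
          hsandwich A B hconj, hJ]
    _ = ((B + s • vecMulVec v v) * (Q * Qᵀ)).charpoly := by
        rw [charpoly_mul_comm, Matrix.mul_assoc]
    _ = (B + s • vecMulVec v v).charpoly := by rw [mul_eq_one_comm.mp horth, Matrix.mul_one]

theorem Matrix.IsHermitian.trace_pow_eq_of_charpoly_eq {𝕜 : Type*} [RCLike 𝕜]
    {A B : Matrix m m 𝕜} (hA : A.IsHermitian) (hB : B.IsHermitian)
    (h : A.charpoly = B.charpoly) (k : ℕ) : (A ^ k).trace = (B ^ k).trace := by
  rw [trace_eq_neg_charpoly_nextCoeff, trace_eq_neg_charpoly_nextCoeff,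
    ← cfc_pow_id (R := ℝ) A k hA.isSelfAdjoint, ← cfc_pow_id (R := ℝ) B k hB.isSelfAdjoint,
    hA.charpoly_cfc_eq, hB.charpoly_cfc_eq, (hA.eigenvalues_eq_eigenvalues_iff hB).2 h]

theorem trace_pow_mul_eq_of_forall_trace_pow_add_smul_eq {A B J : Matrix m m ℝ} (k : ℕ)
    (h : ∀ s : ℝ, ((A + s • J) ^ (k + 1)).trace = ((B + s • J) ^ (k + 1)).trace) :
    (A ^ k * J).trace = (B ^ k * J).trace := by
  set g : Matrix m m ℝ → ℝ → ℝ := fun M s =>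
    ∑ i ∈ Finset.range (k + 1), ((M + s • J) ^ i * J * M ^ (k - i)).trace with hg
  have hdiff : ∀ M s, ((M + s • J) ^ (k + 1)).trace - (M ^ (k + 1)).trace = s * g M s := by
    intro M s
    simp only [hg, ← trace_sub, pow_sub_pow_eq_sum_pow_mul_sub_mul_pow, add_sub_cancel_left,
      Nat.add_sub_cancel, mul_smul_comm, smul_mul_assoc, trace_sum, trace_smul, smul_eq_mul,
      Finset.mul_sum]
  have hg0 : ∀ M, g M 0 = (k + 1) * (M ^ k * J).trace := by
    intro M
    have hterm : ∀ i ∈ Finset.range (k + 1),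
        (M ^ i * J * M ^ (k - i)).trace = (M ^ k * J).trace := by
      intro i hi
      rw [trace_mul_cycle, ← pow_add,
        Nat.sub_add_cancel (Nat.lt_succ_iff.mp (Finset.mem_range.mp hi))]
    simp only [hg, zero_smul, add_zero]
    rw [Finset.sum_congr rfl hterm, Finset.sum_const, Finset.card_range, nsmul_eq_mul]
    push_cast; ring
  have hcont : ∀ M, Continuous (g M) := fun M => by fun_prop
  have hgAB : g A = g B := by
    refine Continuous.ext_on (dense_compl_singleton 0) (hcont A) (hcont B) fun s hs => ?_
    have h0 := h 0
    simp only [zero_smul, add_zero] at h0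
    exact mul_left_cancel₀ hs (by rw [← hdiff, ← hdiff, h s, h0])
  have := congrFun hgAB 0
  rw [hg0, hg0] at this
  exact mul_left_cancel₀ (by positivity) this

theorem dotProduct_pow_mulVec_eq_of_charpoly_add_smul_vecMulVec_eq {A B : Matrix m m ℝ}
    (hA : A.IsHermitian) (hB : B.IsHermitian) (v : m → ℝ)
    (h : ∀ s : ℝ, (A + s • vecMulVec v v).charpoly = (B + s • vecMulVec v v).charpoly)
    (r : ℕ) : v ⬝ᵥ (A ^ r *ᵥ v) = v ⬝ᵥ (B ^ r *ᵥ v) := by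
  have htrace : ∀ M : Matrix m m ℝ, (M * vecMulVec v v).trace = v ⬝ᵥ (M *ᵥ v) := fun M => by
    rw [mul_vecMulVec, trace_vecMulVec, dotProduct_comm]
  rw [← htrace, ← htrace]
  refine trace_pow_mul_eq_of_forall_trace_pow_add_smul_eq r fun s => ?_
  have hJ : (s • vecMulVec v v).IsHermitian := by simp [IsHermitian]
  exact (hA.add hJ).trace_pow_eq_of_charpoly_eq (hB.add hJ) (h s) _

end

section

variable {n : ℕ}

theorem allOnes_eq_vecMulVec : allOnes n = vecMulVec 1 1 := by
  ext; simp [allOnes, vecMulVec]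

theorem transpose_walkMatrix_mulVec_one (A : Matrix (Fin n) (Fin n) ℝ) :
    (walkMatrix A)ᵀ *ᵥ 1 = fun j : Fin n => 1 ⬝ᵥ (A ^ (j : ℕ) *ᵥ 1) := by
  ext j; simp [mulVec, dotProduct, walkMatrix]

theorem transpose_walkMatrix_mul_pow_mul_walkMatrix {A : Matrix (Fin n) (Fin n) ℝ} (hA : A.IsSymm)
    (k : ℕ) : (walkMatrix A)ᵀ * A ^ k * walkMatrix A =
      of fun i j : Fin n => 1 ⬝ᵥ (A ^ ((i : ℕ) + k + j) *ᵥ 1) := by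
  ext i j
  have hcol : ∀ l, (walkMatrix A)ᵀ l = A ^ (l : ℕ) *ᵥ 1 := fun _ => rfl
  rw [mul_mul_apply, hcol, hcol, ← vecMul_transpose, (hA.pow i).eq, ← dotProduct_mulVec,
    mulVec_mulVec, mulVec_mulVec, ← pow_add, ← pow_add, of_apply, add_assoc]

theorem charpoly_add_smul_allOnes_eq_of_walkEquiv {A B : Matrix (Fin n) (Fin n) ℝ}
    (hA : A.IsSymm) (hB : B.IsSymm) (hW : IsUnit (walkMatrix A))
    (h : ∀ r : ℕ, 1 ⬝ᵥ (A ^ r *ᵥ 1) = 1 ⬝ᵥ (B ^ r *ᵥ 1)) (s : ℝ) :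
    (A + s • allOnes n).charpoly = (B + s • allOnes n).charpoly := by
  have hsandwich : ∀ k, (walkMatrix A)ᵀ * A ^ k * walkMatrix A =
      (walkMatrix B)ᵀ * B ^ k * walkMatrix B := by
    intro k
    simp only [transpose_walkMatrix_mul_pow_mul_walkMatrix hA,
      transpose_walkMatrix_mul_pow_mul_walkMatrix hB, h]
  rw [allOnes_eq_vecMulVec]
  refine charpoly_add_smul_vecMulVec_eq_of_transpose_mul_eq 1 hW
    (by simpa using hsandwich 0) (by simpa using hsandwich 1) ?_ s
  simp only [transpose_walkMatrix_mulVec_one, h]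

end

theorem controllable_walkEquiv_iff_generalizedCospectral_general {n : ℕ}
    (G H : SimpleGraph (Fin n)) [DecidableRel G.Adj] [DecidableRel H.Adj]
    (hG : IsUnit (walkMatrix (G.adjMatrix ℝ))) :
    (∀ r : ℕ, (1 : Fin n → ℝ) ⬝ᵥ (((G.adjMatrix ℝ) ^ r) *ᵥ (1 : Fin n → ℝ)) =
        (1 : Fin n → ℝ) ⬝ᵥ (((H.adjMatrix ℝ) ^ r) *ᵥ (1 : Fin n → ℝ))) ↔
    (∀ s : ℝ, (G.adjMatrix ℝ + s • allOnes n).charpoly =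
        (H.adjMatrix ℝ + s • allOnes n).charpoly) := by
  refine ⟨fun h s => charpoly_add_smul_allOnes_eq_of_walkEquiv G.isSymm_adjMatrix
    H.isSymm_adjMatrix hG h s, fun h => ?_⟩
  simp only [allOnes_eq_vecMulVec] at h
  exact dotProduct_pow_mulVec_eq_of_charpoly_add_smul_vecMulVec_eq (G.isHermitian_adjMatrix ℝ)
    (H.isHermitian_adjMatrix ℝ) 1 h

/-- Two controllable graphs are walk-equivalent iff they are generalized cospectral. -/
theorem controllable_walkEquiv_iff_generalizedCospectral {n : ℕ}
    (G H : SimpleGraph (Fin n)) [DecidableRel G.Adj] [DecidableRel H.Adj]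
    (hG : IsUnit (walkMatrix (G.adjMatrix ℝ)))
    (hH : IsUnit (walkMatrix (H.adjMatrix ℝ))) :
    (∀ r : ℕ, (1 : Fin n → ℝ) ⬝ᵥ (((G.adjMatrix ℝ) ^ r) *ᵥ (1 : Fin n → ℝ)) =
        (1 : Fin n → ℝ) ⬝ᵥ (((H.adjMatrix ℝ) ^ r) *ᵥ (1 : Fin n → ℝ))) ↔
    (∀ s : ℝ, (G.adjMatrix ℝ + s • allOnes n).charpoly =
        (H.adjMatrix ℝ + s • allOnes n).charpoly) :=
  controllable_walkEquiv_iff_generalizedCospectral_general G H hG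
end

section
/- Let G and H be simple graphs on n vertices with real adjacency matrices A and B. If G and H are generalized cospectral (the characteristic polynomials of A + sJ and B + sJ coincide for every real s), then G and H are walk-equivalent, i.e., 𝟙ᵀAʳ𝟙 = 𝟙ᵀBʳ𝟙 for every integer r ≥ 0. -/
open Matrix Polynomial Finset

variable {n : ℕ}

/-- charpoly is invariant under conjugation by invertible matrices. -/
lemma charpoly_conj_aux (u D v : Matrix (Fin n) (Fin n) ℝ) (huv : u * v = 1) :
    (u * D * v).charpoly = D.charpoly := by
  have hmap : ∀ M : Matrix (Fin n) (Fin n) ℝ, (C : ℝ →+* ℝ[X]).mapMatrix M = M.map C := fun _ => rfl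
  have hcm : charmatrix (u * D * v) = u.map C * charmatrix D * v.map C := by
    unfold charmatrix
    rw [hmap, hmap]
    have h1 : (u * D * v).map (C : ℝ →+* ℝ[X]) = u.map C * D.map C * v.map C := by
      rw [Matrix.map_mul, Matrix.map_mul]
    have h2 : u.map (C : ℝ →+* ℝ[X]) * v.map C = 1 := by
      rw [← Matrix.map_mul, huv, Matrix.map_one _ (map_zero C) (map_one C)]
    rw [mul_sub, sub_mul, h1]
    congr 1
    rw [Matrix.scalar_apply,
      show (diagonal fun _ : Fin n => (X : ℝ[X])) = (X : ℝ[X]) • 1 from by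
        ext i j; by_cases h : i = j <;> simp [h],
      mul_smul_comm, mul_one, smul_mul_assoc, h2]
  unfold Matrix.charpoly
  rw [hcm, det_mul, det_mul]
  have h2 : u.map (C : ℝ →+* ℝ[X]) * v.map C = 1 := by
    rw [← Matrix.map_mul, huv, Matrix.map_one _ (map_zero C) (map_one C)]
  have : det (u.map (C : ℝ →+* ℝ[X])) * det (v.map C) = 1 := by
    rw [← det_mul, h2, det_one]
  linear_combination (det (charmatrix D)) * this

lemma charpoly_diagonal_aux (d : Fin n → ℝ) :
    (diagonal d).charpoly = ∏ i, (X - C (d i)) := by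
  have : charmatrix (diagonal d) = diagonal fun i => (X : ℝ[X]) - C (d i) := by
    ext i j
    by_cases h : i = j
    · subst h; simp [charmatrix_apply_eq]
    · simp [charmatrix_apply_ne _ _ _ h, diagonal_apply_ne _ h]
  rw [Matrix.charpoly, this, det_diagonal]

/-- Traces of powers of a real symmetric matrix as power sums of eigenvalues. -/
lemma trace_pow_symm (M : Matrix (Fin n) (Fin n) ℝ) (hM : M.IsHermitian) (k : ℕ) :
    trace (M ^ k) = ∑ i, hM.eigenvalues i ^ k := by
  set U : Matrix (Fin n) (Fin n) ℝ := (hM.eigenvectorUnitary : Matrix (Fin n) (Fin n) ℝ)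
  set D : Matrix (Fin n) (Fin n) ℝ := diagonal (RCLike.ofReal ∘ hM.eigenvalues)
  have hU : U * star U = 1 := (Matrix.mem_unitaryGroup_iff).mp hM.eigenvectorUnitary.2
  have hU' : star U * U = 1 := (Matrix.mem_unitaryGroup_iff').mp hM.eigenvectorUnitary.2
  have key : ∀ m : ℕ, M ^ m = U * D ^ m * star U := by
    intro m
    induction m with
    | zero => simp [hU]
    | succ m ih =>
      rw [pow_succ, ih, hM.spectral_theorem, pow_succ]
      show U * D ^ m * star U * (U * D * star U) = U * (D ^ m * D) * star U
      have h3 : star U * (U * (D * star U)) = D * star U := by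
        rw [← mul_assoc, hU', one_mul]
      simp only [mul_assoc]
      rw [h3]
  rw [key k, trace_mul_cycle, hU', one_mul]
  have : D ^ k = diagonal fun i => hM.eigenvalues i ^ k := by
    rw [show D = diagonal hM.eigenvalues by simp [D], diagonal_pow]
    rfl
  rw [this, trace_diagonal]

lemma charpoly_eq_prod (M : Matrix (Fin n) (Fin n) ℝ) (hM : M.IsHermitian) :
    M.charpoly = ∏ i, (X - C (hM.eigenvalues i)) := by
  have hU : (hM.eigenvectorUnitary : Matrix (Fin n) (Fin n) ℝ) *
      star (hM.eigenvectorUnitary : Matrix (Fin n) (Fin n) ℝ) = 1 :=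
    (Matrix.mem_unitaryGroup_iff).mp hM.eigenvectorUnitary.2
  conv_lhs => rw [hM.spectral_theorem, Unitary.conjStarAlgAut_apply]
  rw [charpoly_conj_aux _ _ _ hU,
    show diagonal (RCLike.ofReal ∘ hM.eigenvalues) = diagonal hM.eigenvalues from by simp,
    charpoly_diagonal_aux]

lemma trace_pow_eq_of_charpoly_eq (M N : Matrix (Fin n) (Fin n) ℝ)
    (hM : M.IsHermitian) (hN : N.IsHermitian) (h : M.charpoly = N.charpoly) (k : ℕ) :
    trace (M ^ k) = trace (N ^ k) := by
  have hmult : Multiset.map hM.eigenvalues Finset.univ.val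
      = Multiset.map hN.eigenvalues Finset.univ.val := by
    have h1 : ((Finset.univ.val.map hM.eigenvalues).map fun a => X - C a).prod
        = ((Finset.univ.val.map hN.eigenvalues).map fun a => X - C a).prod := by
      rw [Multiset.map_map, Multiset.map_map]
      have := (charpoly_eq_prod M hM).symm.trans (h.trans (charpoly_eq_prod N hN))
      rw [Finset.prod_eq_multiset_prod, Finset.prod_eq_multiset_prod] at this
      exact this
    have h2 := congrArg Polynomial.roots h1
    rwa [roots_multiset_prod_X_sub_C, roots_multiset_prod_X_sub_C] at h2
  rw [trace_pow_symm M hM k, trace_pow_symm N hN k,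
    Finset.sum_eq_multiset_sum, Finset.sum_eq_multiset_sum]
  rw [show Finset.univ.val.map (fun i => hM.eigenvalues i ^ k)
      = (Finset.univ.val.map hM.eigenvalues).map (fun x => x ^ k) from by
        rw [Multiset.map_map]; rfl,
    show Finset.univ.val.map (fun i => hN.eigenvalues i ^ k)
      = (Finset.univ.val.map hN.eigenvalues).map (fun x => x ^ k) from by
        rw [Multiset.map_map]; rfl,
    hmult]

/-- entrywise coefficient extraction -/
def lc (k : ℕ) (M : Matrix (Fin n) (Fin n) ℝ[X]) : Matrix (Fin n) (Fin n) ℝ :=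
  M.map fun p => p.coeff k

lemma coeff_one_mul' (p q : ℝ[X]) :
    (p * q).coeff 1 = p.coeff 0 * q.coeff 1 + p.coeff 1 * q.coeff 0 := by
  rw [Polynomial.coeff_mul, Finset.Nat.sum_antidiagonal_eq_sum_range_succ_mk,
    Finset.sum_range_succ, Finset.sum_range_one]

lemma lc0_mul (P Q : Matrix (Fin n) (Fin n) ℝ[X]) : lc 0 (P * Q) = lc 0 P * lc 0 Q := by
  ext i j
  simp [lc, Matrix.mul_apply, Polynomial.finset_sum_coeff, Polynomial.mul_coeff_zero]

lemma lc1_mul (P Q : Matrix (Fin n) (Fin n) ℝ[X]) :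
    lc 1 (P * Q) = lc 0 P * lc 1 Q + lc 1 P * lc 0 Q := by
  ext i j
  simp [lc, Matrix.mul_apply, Polynomial.finset_sum_coeff, coeff_one_mul',
    Finset.sum_add_distrib]

lemma lc_pow (A J : Matrix (Fin n) (Fin n) ℝ) (k : ℕ) :
    lc 0 ((A.map C + (X : ℝ[X]) • J.map C) ^ k) = A ^ k ∧
    lc 1 ((A.map C + (X : ℝ[X]) • J.map C) ^ k)
      = ∑ m ∈ Finset.range k, A ^ m * J * A ^ (k - 1 - m) := by
  have hlc0 : lc 0 (A.map C + (X : ℝ[X]) • J.map C) = A := by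
    ext i j
    simp [lc, Matrix.add_apply, Matrix.smul_apply, Matrix.map_apply, smul_eq_mul,
      Polynomial.mul_coeff_zero]
  have hlc1 : lc 1 (A.map C + (X : ℝ[X]) • J.map C) = J := by
    ext i j
    simp [lc, Matrix.add_apply, Matrix.smul_apply, Matrix.map_apply, smul_eq_mul,
      Polynomial.coeff_X_mul]
  induction k with
  | zero =>
    constructor <;>
    · ext i j
      by_cases h : i = j <;>
        simp [lc, Matrix.one_apply, h, Polynomial.coeff_one]
  | succ k ih =>
    obtain ⟨ih0, ih1⟩ := ih
    constructor
    · rw [pow_succ, lc0_mul, ih0, hlc0, ← pow_succ]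
    · rw [pow_succ, lc1_mul, ih0, ih1, hlc0, hlc1]
      rw [Finset.sum_range_succ]
      have h1 : (∑ m ∈ Finset.range k, A ^ m * J * A ^ (k - 1 - m)) * A
          = ∑ m ∈ Finset.range k, A ^ m * J * A ^ (k + 1 - 1 - m) := by
        rw [Finset.sum_mul]
        refine Finset.sum_congr rfl fun m hm => ?_
        rw [Finset.mem_range] at hm
        rw [mul_assoc, ← pow_succ]
        congr 2
        omega
      rw [h1]
      rw [show k + 1 - 1 - k = 0 from by omega, pow_zero, mul_one]
      exact add_comm _ _

lemma trace_J_eq (A : Matrix (Fin n) (Fin n) ℝ) (r : ℕ) :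
    (1 : Fin n → ℝ) ⬝ᵥ ((A ^ r) *ᵥ (1 : Fin n → ℝ)) = trace (A ^ r * allOnes n) := by
  simp [dotProduct, Matrix.mulVec, Matrix.trace, Matrix.diag, Matrix.mul_apply, allOnes]

lemma coeff1_trace (A : Matrix (Fin n) (Fin n) ℝ) (k : ℕ) :
    (trace ((A.map C + (X : ℝ[X]) • (allOnes n).map C) ^ k)).coeff 1
      = (k : ℝ) * trace (A ^ (k - 1) * allOnes n) := by
  have h := (lc_pow A (allOnes n) k).2
  have ht : (trace ((A.map C + (X : ℝ[X]) • (allOnes n).map C) ^ k)).coeff 1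
      = trace (lc 1 ((A.map C + (X : ℝ[X]) • (allOnes n).map C) ^ k)) := by
    simp [Matrix.trace, Matrix.diag, lc, Polynomial.finset_sum_coeff]
  rw [ht, h, trace_sum]
  have : ∀ m ∈ Finset.range k,
      trace (A ^ m * allOnes n * A ^ (k - 1 - m)) = trace (A ^ (k - 1) * allOnes n) := by
    intro m hm
    rw [Finset.mem_range] at hm
    rw [trace_mul_comm, ← mul_assoc, ← pow_add]
    have : k - 1 - m + m = k - 1 := by omega
    rw [this]
  rw [Finset.sum_congr rfl this, Finset.sum_const, Finset.card_range, nsmul_eq_mul]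

lemma eval_trace (A : Matrix (Fin n) (Fin n) ℝ) (k : ℕ) (s : ℝ) :
    Polynomial.eval s (trace ((A.map C + (X : ℝ[X]) • (allOnes n).map C) ^ k))
      = trace ((A + s • allOnes n) ^ k) := by
  have h1 : ((A.map C + (X : ℝ[X]) • (allOnes n).map C) ^ k).map (evalRingHom s)
      = (A + s • allOnes n) ^ k := by
    rw [← RingHom.mapMatrix_apply, map_pow, RingHom.mapMatrix_apply]
    congr 1
    ext i j
    simp [Matrix.map_apply, Matrix.add_apply, Matrix.smul_apply, smul_eq_mul, allOnes]
  have h2 : ∀ N : Matrix (Fin n) (Fin n) ℝ[X],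
      Polynomial.eval s (trace N) = trace (N.map (evalRingHom s)) := by
    intro N
    simp [Matrix.trace, Matrix.diag, Polynomial.eval_finset_sum, Matrix.map_apply]
  rw [h2, h1]

lemma adj_hermitian (G : SimpleGraph (Fin n)) [DecidableRel G.Adj] (s : ℝ) :
    (G.adjMatrix ℝ + s • allOnes n).IsHermitian := by
  show (G.adjMatrix ℝ + s • allOnes n)ᴴ = _
  rw [conjTranspose_eq_transpose_of_trivial, transpose_add, transpose_smul,
    SimpleGraph.transpose_adjMatrix]
  rfl

/-- Generalized cospectral graphs are walk-equivalent. -/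
theorem generalizedCospectral_walkEquiv {n : ℕ}
    (G H : SimpleGraph (Fin n)) [DecidableRel G.Adj] [DecidableRel H.Adj]
    (hgc : ∀ s : ℝ, (G.adjMatrix ℝ + s • allOnes n).charpoly =
        (H.adjMatrix ℝ + s • allOnes n).charpoly) :
    ∀ r : ℕ, (1 : Fin n → ℝ) ⬝ᵥ (((G.adjMatrix ℝ) ^ r) *ᵥ (1 : Fin n → ℝ)) =
        (1 : Fin n → ℝ) ⬝ᵥ (((H.adjMatrix ℝ) ^ r) *ᵥ (1 : Fin n → ℝ)) := by
  intro r
  set A := G.adjMatrix ℝ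
  set B := H.adjMatrix ℝ
  have htr : ∀ s : ℝ, trace ((A + s • allOnes n) ^ (r + 1))
      = trace ((B + s • allOnes n) ^ (r + 1)) := fun s =>
    trace_pow_eq_of_charpoly_eq _ _ (adj_hermitian G s) (adj_hermitian H s) (hgc s) (r + 1)
  have hP : trace ((A.map C + (X : ℝ[X]) • (allOnes n).map C) ^ (r + 1))
      = trace ((B.map C + (X : ℝ[X]) • (allOnes n).map C) ^ (r + 1)) := by
    apply Polynomial.funext
    intro s
    rw [eval_trace, eval_trace]
    exact htr s
  have h1 := congrArg (fun p => p.coeff 1) hP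
  simp only [coeff1_trace] at h1
  rw [Nat.add_sub_cancel] at h1
  have h2 : trace (A ^ r * allOnes n) = trace (B ^ r * allOnes n) := by
    have hne : ((r + 1 : ℕ) : ℝ) ≠ 0 := by positivity
    exact mul_left_cancel₀ hne h1
  rw [trace_J_eq, trace_J_eq, h2]
end

section
/- Let G and H be simple graphs on n vertices with real adjacency matrices A and B. If A and B have equal characteristic polynomials, and the complements' adjacency matrices Ā = J − I − A and B̄ = J − I − B also have equal characteristic polynomials, then G and H are generalized cospectral: for every real s the characteristic polynomial of A + sJ equals that of B + sJ. -/
open Matrix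

open Polynomial

lemma charmatrix_add_smul {n : ℕ} (M : Matrix (Fin n) (Fin n) ℝ) (t : ℝ) :
    charmatrix (M + t • allOnes n) =
      charmatrix M - (C t) • (allOnes n).map C := by
  ext i j
  by_cases h : i = j <;>
    simp [h, charmatrix_apply_eq, charmatrix_apply_ne, allOnes, Matrix.sub_apply, Matrix.smul_apply] <;> ring

lemma allOnes_map_eq {n : ℕ} :
    ((allOnes n).map (C : ℝ → ℝ[X])).map (algebraMap ℝ[X] (RatFunc ℝ)) =
      replicateCol Unit (fun _ => (1 : RatFunc ℝ)) * replicateRow Unit (fun _ => (1 : RatFunc ℝ)) := by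
  ext i j
  simp [allOnes, Matrix.mul_apply, replicateCol, replicateRow]

set_option maxHeartbeats 1000000 in
set_option synthInstance.maxHeartbeats 400000 in
lemma charpoly_add_smul {n : ℕ} (M : Matrix (Fin n) (Fin n) ℝ) (s : ℝ) :
    (M + s • allOnes n).charpoly =
      M.charpoly + C s * (M.charpoly - (M - allOnes n).charpoly) := by
  set φ : ℝ[X] →+* RatFunc ℝ := algebraMap ℝ[X] (RatFunc ℝ) with hφ
  apply RatFunc.algebraMap_injective ℝ
  set v : Fin n → RatFunc ℝ := fun _ => 1 with hv
  set D : Matrix (Fin n) (Fin n) (RatFunc ℝ) := (charmatrix M).map φ with hD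
  have hdet : D.det = φ M.charpoly := ((RingHom.map_det φ _)).symm
  have hunit : IsUnit D.det := by
    rw [hdet, isUnit_iff_ne_zero]
    intro h
    exact M.charpoly_monic.ne_zero
      (RatFunc.algebraMap_injective ℝ (by rw [map_zero]; exact h))
  set w : RatFunc ℝ := (replicateRow Unit v * D⁻¹ * replicateCol Unit v) default default with hw
  have key : ∀ t : ℝ, φ ((M + t • allOnes n).charpoly) = φ M.charpoly * (1 - φ (C t) * w) := by
    intro t
    rw [Matrix.charpoly, RingHom.map_det, charmatrix_add_smul]
    have hmap : φ.mapMatrix (charmatrix M - C t • (allOnes n).map C)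
        = D + replicateCol Unit ((-φ (C t)) • v) * replicateRow Unit v := by
      ext i j
      simp [Matrix.mul_apply, Matrix.sub_apply, Matrix.smul_apply, allOnes, map_sub, _root_.map_mul, hD, hv,
        sub_eq_add_neg]
    have h11 : (1 + replicateRow Unit v * D⁻¹ * replicateCol Unit ((-φ (C t)) • v)).det
        = 1 - φ (C t) * w := by
      rw [Matrix.replicateCol_smul, Matrix.mul_smul, det_unique, Matrix.add_apply, one_apply_eq,
        Matrix.smul_apply, ← hw, smul_eq_mul]
      ring
    rw [hmap, det_add_replicateCol_mul_replicateRow hunit, h11, hdet]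
  have hM1 : M - allOnes n = M + (-1 : ℝ) • allOnes n := by
    rw [neg_smul, one_smul, sub_eq_add_neg]
  rw [hM1, map_add, _root_.map_mul, map_sub, key s, key (-1)]
  simp only [map_neg, Polynomial.C_1, _root_.map_one]
  ring

lemma aeval_invol (p : ℝ[X]) :
    aeval (-X - C 1 : ℝ[X]) (aeval (-X - C 1 : ℝ[X]) p) = p := by
  rw [← comp_eq_aeval, ← comp_eq_aeval, comp_assoc]
  simp [sub_comp, neg_comp, X_comp, C_comp]

lemma aeval_inj {p q : ℝ[X]}
    (h : aeval (-X - C 1 : ℝ[X]) p = aeval (-X - C 1 : ℝ[X]) q) : p = q := by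
  rw [← aeval_invol p, h, aeval_invol]

lemma aeval_charpoly_sub {n : ℕ} (M : Matrix (Fin n) (Fin n) ℝ) :
    aeval (-X - C 1 : ℝ[X]) ((M - allOnes n).charpoly) =
      (-1 : ℝ[X]) ^ n * (allOnes n - 1 - M).charpoly := by
  rw [Matrix.charpoly, AlgHom.map_det]
  have hm : (charmatrix (M - allOnes n)).map (aeval (-X - C 1 : ℝ[X])) =
      -charmatrix (allOnes n - 1 - M) := by
    ext i j
    by_cases h : i = j <;>
      simp [h, charmatrix_apply_eq, charmatrix_apply_ne, allOnes, Matrix.sub_apply, one_apply,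
        map_sub, aeval_X, aeval_C, Polynomial.algebraMap_eq] <;> ring
  rw [AlgHom.mapMatrix_apply, hm, Matrix.det_neg, Fintype.card_fin, Matrix.charpoly]

/-- Johnson–Newman: cospectral graphs with cospectral complements are
generalized cospectral. -/
theorem cospectral_with_cospectral_complements_generalizedCospectral {n : ℕ}
    (G H : SimpleGraph (Fin n)) [DecidableRel G.Adj] [DecidableRel H.Adj]
    (hA : (G.adjMatrix ℝ).charpoly = (H.adjMatrix ℝ).charpoly)
    (hAc : (allOnes n - 1 - G.adjMatrix ℝ).charpoly =
        (allOnes n - 1 - H.adjMatrix ℝ).charpoly) :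
    ∀ s : ℝ, (G.adjMatrix ℝ + s • allOnes n).charpoly =
        (H.adjMatrix ℝ + s • allOnes n).charpoly := by
  intro s
  have hsub : (G.adjMatrix ℝ - allOnes n).charpoly =
      (H.adjMatrix ℝ - allOnes n).charpoly := by
    apply aeval_inj
    rw [aeval_charpoly_sub, aeval_charpoly_sub, hAc]
  rw [charpoly_add_smul, charpoly_add_smul, hA, hsub]
end

section
/- Let G and H be controllable simple graphs on n vertices with real adjacency matrices A and B and walk matrices W_G and W_H. If G and H are generalized cospectral (characteristic polynomials of A + sJ and B + sJ coincide for all real s), then the matrix Q = W_H W_G⁻¹ satisfies QAQᵀ = B and Q𝟙 = 𝟙. -/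
open Matrix

namespace GCAux

open Polynomial

variable {n : ℕ}

noncomputable def mom (A : Matrix (Fin n) (Fin n) ℝ) (k : ℕ) : ℝ :=
  (1 : Fin n → ℝ) ⬝ᵥ ((A ^ k) *ᵥ (1 : Fin n → ℝ))

noncomputable def Dmat (A : Matrix (Fin n) (Fin n) ℝ) (k : ℕ) : Matrix (Fin n) (Fin n) ℝ :=
  ∑ i ∈ Finset.range (n + 1 - k), A.charpoly.coeff (k + i) • A ^ i

noncomputable def Nmat (A : Matrix (Fin n) (Fin n) ℝ) : Matrix (Fin n) (Fin n) ℝ[X] :=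
  ∑ k ∈ Finset.range n, (X : ℝ[X]) ^ k • (Dmat A (k + 1)).map C

noncomputable def Phi (A : Matrix (Fin n) (Fin n) ℝ) : ℝ[X] :=
  (1 : Fin n → ℝ[X]) ⬝ᵥ (Nmat A *ᵥ (1 : Fin n → ℝ[X]))

lemma charpoly_natDeg (A : Matrix (Fin n) (Fin n) ℝ) : A.charpoly.natDegree = n := by
  simp [Matrix.charpoly_natDegree_eq_dim]

lemma coeff_top (A : Matrix (Fin n) (Fin n) ℝ) : A.charpoly.coeff n = 1 := by
  have := A.charpoly_monic
  simpa [charpoly_natDeg] using this.coeff_natDegree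

lemma coeff_zero_of_gt (A : Matrix (Fin n) (Fin n) ℝ) {k : ℕ} (hk : n < k) :
    A.charpoly.coeff k = 0 :=
  Polynomial.coeff_eq_zero_of_natDegree_lt (by rw [charpoly_natDeg]; omega)

lemma Dmat_rec (A : Matrix (Fin n) (Fin n) ℝ) (k : ℕ) :
    A * Dmat A (k + 1) + A.charpoly.coeff k • 1 = Dmat A k := by
  rcases le_or_gt k n with h | h
  · have h1 : n + 1 - k = (n - k) + 1 := by omega
    have h2 : n + 1 - (k + 1) = n - k := by omega
    rw [Dmat, Dmat, h1, h2, Finset.sum_range_succ', Finset.mul_sum]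
    congr 1
    refine Finset.sum_congr rfl fun i _ => ?_
    rw [mul_smul_comm, ← pow_succ', show k + 1 + i = k + (i + 1) by omega]
  · have h1 : n + 1 - k = 0 := by omega
    have h2 : n + 1 - (k + 1) = 0 := by omega
    rw [Dmat, Dmat, h1, h2, coeff_zero_of_gt A h]
    simp

lemma Dmat_zero (A : Matrix (Fin n) (Fin n) ℝ) : Dmat A 0 = 0 := by
  have h := A.aeval_self_charpoly
  rw [Polynomial.aeval_eq_sum_range] at h
  rw [charpoly_natDeg] at h
  simpa [Dmat] using h

lemma Dmat_top (A : Matrix (Fin n) (Fin n) ℝ) : Dmat A n = 1 := by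
  rw [Dmat, show n + 1 - n = 1 by omega]
  simp [coeff_top]

lemma sum_mulVec {R : Type*} [CommRing R] {ι : Type*} (s : Finset ι)
    (f : ι → Matrix (Fin n) (Fin n) R) (v : Fin n → R) :
    (∑ k ∈ s, f k) *ᵥ v = ∑ k ∈ s, (f k *ᵥ v) := by
  ext i
  simp only [Matrix.mulVec, dotProduct, Matrix.sum_apply, Finset.sum_mul,
    Finset.sum_apply]
  exact Finset.sum_comm

lemma dot_sum {R : Type*} [CommRing R] {ι : Type*} (s : Finset ι)
    (v : Fin n → R) (f : ι → Fin n → R) :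
    v ⬝ᵥ (∑ k ∈ s, f k) = ∑ k ∈ s, v ⬝ᵥ f k := by
  simp only [dotProduct, Finset.sum_apply, Finset.mul_sum]
  exact Finset.sum_comm

lemma smul_one_map (a : ℝ) :
    ((a • (1 : Matrix (Fin n) (Fin n) ℝ)).map C) = C a • (1 : Matrix (Fin n) (Fin n) ℝ[X]) := by
  ext i j
  by_cases h : i = j <;> simp [h, Matrix.map_apply, Matrix.one_apply]

lemma charmatrix_mul_map (A M : Matrix (Fin n) (Fin n) ℝ) :
    charmatrix A * (M.map C) = (X : ℝ[X]) • M.map C - (A * M).map C := by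
  rw [charmatrix, sub_mul, RingHom.mapMatrix_apply, ← Matrix.map_mul]
  congr 1
  ext i j
  simp [Matrix.mul_apply, Matrix.scalar, Matrix.diagonal, Matrix.map_apply,
    Finset.sum_ite_eq, Matrix.smul_apply]

lemma charmatrix_mul_Nmat (A : Matrix (Fin n) (Fin n) ℝ) :
    charmatrix A * Nmat A = A.charpoly • (1 : Matrix (Fin n) (Fin n) ℝ[X]) := by
  have hrec := Dmat_rec A
  have h0 := Dmat_zero A
  have htop := Dmat_top A
  have hdeg := charpoly_natDeg A
  have key : ∀ k, charmatrix A * ((X : ℝ[X]) ^ k • (Dmat A (k + 1)).map C)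
      = ((X : ℝ[X]) ^ (k + 1) • (Dmat A (k + 1)).map C
          - (X : ℝ[X]) ^ k • (Dmat A k).map C)
        + (C (A.charpoly.coeff k) * X ^ k) • (1 : Matrix (Fin n) (Fin n) ℝ[X]) := by
    intro k
    rw [Matrix.mul_smul, charmatrix_mul_map, smul_sub, smul_smul,
      show A * Dmat A (k + 1) = Dmat A k - A.charpoly.coeff k • 1 by
        rw [← hrec k]; abel,
      show ((X : ℝ[X]) ^ k * X) = X ^ (k + 1) by ring]
    rw [Matrix.map_sub _ (by exact fun a b => map_sub C a b), smul_sub, smul_one_map,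
      smul_smul, show (X : ℝ[X]) ^ k * C (A.charpoly.coeff k)
        = C (A.charpoly.coeff k) * X ^ k by ring]
    abel
  rw [Nmat, Finset.mul_sum, Finset.sum_congr rfl fun k _ => key k,
    Finset.sum_add_distrib,
    Finset.sum_range_sub (f := fun k => (X : ℝ[X]) ^ k • (Dmat A k).map C),
    h0, htop]
  have hone : ((1 : Matrix (Fin n) (Fin n) ℝ).map C) = 1 := by
    ext i j
    by_cases h : i = j <;> simp [h, Matrix.map_apply, Matrix.one_apply]
  rw [hone]
  simp only [smul_zero, sub_zero, Matrix.map_zero C (map_zero C)]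
  have : ∑ k ∈ Finset.range n, (C (A.charpoly.coeff k) * X ^ k)
        • (1 : Matrix (Fin n) (Fin n) ℝ[X])
      = (∑ k ∈ Finset.range n, C (A.charpoly.coeff k) * X ^ k) • 1 := by
    rw [Finset.sum_smul]
  rw [this, ← add_smul]
  congr 1
  conv_rhs => rw [A.charpoly_monic.as_sum, hdeg]

lemma Phi_eq_sum (A : Matrix (Fin n) (Fin n) ℝ[X]) :
    (1 : Fin n → ℝ[X]) ⬝ᵥ (A *ᵥ (1 : Fin n → ℝ[X])) = ∑ i, ∑ j, A i j := by
  simp [Matrix.mulVec, dotProduct]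

lemma charmatrix_add_allOnes (A : Matrix (Fin n) (Fin n) ℝ) :
    charmatrix (A + allOnes n) = charmatrix A - (allOnes n).map C := by
  ext i j
  by_cases h : i = j <;>
    simp [h, charmatrix_apply, Matrix.diagonal_apply_ne, allOnes, Matrix.sub_apply,
      Matrix.map_apply, Matrix.add_apply, map_add] <;> ring

lemma main_det (A : Matrix (Fin n) (Fin n) ℝ) (N : Matrix (Fin n) (Fin n) ℝ[X])
    (hN : charmatrix A * N = A.charpoly • 1) (Φ : ℝ[X])
    (hΦ : Φ = (1 : Fin n → ℝ[X]) ⬝ᵥ (N *ᵥ (1 : Fin n → ℝ[X]))) :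
    (A + allOnes n).charpoly = A.charpoly - Φ := by
  classical
  set K := FractionRing ℝ[X]
  letI : Field K := inferInstance
  set φ : ℝ[X] →+* K := algebraMap ℝ[X] K with hφ
  have hinj : Function.Injective φ := IsFractionRing.injective ℝ[X] K
  apply hinj
  have hp0 : φ A.charpoly ≠ 0 := by
    intro h
    exact A.charpoly_monic.ne_zero (hinj (by simpa using h))
  set M : Matrix (Fin n) (Fin n) K := (charmatrix A).map φ with hM
  have hdet : M.det = φ A.charpoly := (RingHom.map_det φ (charmatrix A)).symm
  have hMN : M * (N.map φ) = φ A.charpoly • 1 := by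
    rw [hM, ← Matrix.map_mul, hN]
    ext i j
    by_cases h : i = j <;> simp [h, Matrix.map_apply, Matrix.one_apply, Matrix.smul_apply]
  have hinvM : M⁻¹ = (φ A.charpoly)⁻¹ • N.map φ := by
    apply Matrix.inv_eq_right_inv
    rw [Matrix.mul_smul, hMN, smul_smul, inv_mul_cancel₀ hp0, one_smul]
  have hunit : IsUnit M.det := by rw [hdet]; exact (isUnit_iff_ne_zero).mpr hp0
  have hsplit : (charmatrix (A + allOnes n)).map φ
      = M + replicateCol Unit (fun _ : Fin n => (-1 : K)) * replicateRow Unit (fun _ : Fin n => (1 : K)) := by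
    rw [charmatrix_add_allOnes]
    ext i j
    simp [hM, Matrix.map_apply, Matrix.sub_apply, Matrix.add_apply, Matrix.mul_apply,
      allOnes, sub_eq_add_neg]
  have hφcp : φ ((A + allOnes n).charpoly) = ((charmatrix (A + allOnes n)).map φ).det := by
    rw [Matrix.charpoly, RingHom.map_det, RingHom.mapMatrix_apply]
  have hs : ∀ i j, M⁻¹ i j = (φ A.charpoly)⁻¹ * φ (N i j) := by
    intro i j; rw [hinvM]; simp [Matrix.smul_apply, Matrix.map_apply]
  have hsum : ∑ j, ∑ i, M⁻¹ i j = (φ A.charpoly)⁻¹ * φ Φ := by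
    rw [hΦ, Phi_eq_sum, Finset.sum_comm, map_sum, Finset.mul_sum]
    refine Finset.sum_congr rfl fun i _ => ?_
    rw [map_sum, Finset.mul_sum]
    exact Finset.sum_congr rfl fun j _ => hs i j
  set E : Matrix Unit Unit K :=
    1 + replicateRow Unit (fun _ : Fin n => (1:K)) * M⁻¹ * replicateCol Unit (fun _ : Fin n => (-1:K)) with hE
  have hentry : E default default = 1 - (φ A.charpoly)⁻¹ * φ Φ := by
    rw [← hsum, hE]
    simp [Matrix.add_apply, Matrix.mul_apply, Matrix.one_apply_eq, Finset.sum_mul,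
      sub_eq_add_neg, Finset.sum_neg_distrib]
  rw [hφcp, hsplit, Matrix.det_add_replicateCol_mul_replicateRow hunit, Matrix.det_unique E, hentry, hdet]
  field_simp
  rw [map_sub]

lemma oneDotMap (M : Matrix (Fin n) (Fin n) ℝ) :
    (1 : Fin n → ℝ[X]) ⬝ᵥ ((M.map C) *ᵥ (1 : Fin n → ℝ[X]))
      = C ((1 : Fin n → ℝ) ⬝ᵥ (M *ᵥ (1 : Fin n → ℝ))) := by
  simp [dotProduct, Matrix.mulVec, Matrix.map_apply, map_sum]

lemma Phi_sum_form (A : Matrix (Fin n) (Fin n) ℝ) :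
    Phi A = ∑ k ∈ Finset.range n,
      C ((1 : Fin n → ℝ) ⬝ᵥ (Dmat A (k + 1) *ᵥ (1 : Fin n → ℝ))) * X ^ k := by
  rw [Phi, Nmat, sum_mulVec, dot_sum]
  refine Finset.sum_congr rfl fun k _ => ?_
  rw [Matrix.smul_mulVec, dotProduct_smul, oneDotMap, smul_eq_mul, mul_comm]

lemma Phi_coeff (A : Matrix (Fin n) (Fin n) ℝ) {k : ℕ} (hk : k < n) :
    (Phi A).coeff k = (1 : Fin n → ℝ) ⬝ᵥ (Dmat A (k + 1) *ᵥ (1 : Fin n → ℝ)) := by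
  rw [Phi_sum_form, Polynomial.finset_sum_coeff]
  simp only [Polynomial.coeff_C_mul, Polynomial.coeff_X_pow, mul_ite, mul_one, mul_zero]
  rw [Finset.sum_ite_eq (Finset.range n)]
  simp [Finset.mem_range.mpr hk]

lemma dot_Dmat (A : Matrix (Fin n) (Fin n) ℝ) (k : ℕ) :
    (1 : Fin n → ℝ) ⬝ᵥ (Dmat A (k + 1) *ᵥ (1 : Fin n → ℝ))
      = ∑ i ∈ Finset.range (n - k), A.charpoly.coeff (k + 1 + i) * mom A i := by
  rw [Dmat, show n + 1 - (k + 1) = n - k by omega, sum_mulVec, dot_sum]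
  refine Finset.sum_congr rfl fun i _ => ?_
  rw [Matrix.smul_mulVec, dotProduct_smul, smul_eq_mul, mom]

lemma pow_top (A : Matrix (Fin n) (Fin n) ℝ) :
    A ^ n = -∑ i ∈ Finset.range n, A.charpoly.coeff i • A ^ i := by
  have h := A.aeval_self_charpoly
  rw [Polynomial.aeval_eq_sum_range, charpoly_natDeg, Finset.sum_range_succ, coeff_top,
    one_smul] at h
  linear_combination (norm := abel) h

lemma momrec (A : Matrix (Fin n) (Fin n) ℝ) (t : ℕ) :
    mom A (t + n) = -∑ i ∈ Finset.range n, A.charpoly.coeff i * mom A (t + i) := by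
  have h : A ^ (t + n) = -∑ i ∈ Finset.range n, A.charpoly.coeff i • A ^ (t + i) := by
    rw [pow_add, pow_top, mul_neg, Finset.mul_sum]
    congr 1
    refine Finset.sum_congr rfl fun i _ => ?_
    rw [mul_smul_comm, ← pow_add]
  rw [mom, h, Matrix.neg_mulVec, sum_mulVec, dotProduct_neg, dot_sum]
  congr 1
  refine Finset.sum_congr rfl fun i _ => ?_
  rw [Matrix.smul_mulVec, dotProduct_smul, smul_eq_mul, mom]

lemma mom_eq_of (A B : Matrix (Fin n) (Fin n) ℝ) (hp : A.charpoly = B.charpoly)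
    (hd : ∀ k, k < n → (1 : Fin n → ℝ) ⬝ᵥ (Dmat A (k + 1) *ᵥ (1 : Fin n → ℝ))
        = (1 : Fin n → ℝ) ⬝ᵥ (Dmat B (k + 1) *ᵥ (1 : Fin n → ℝ))) :
    ∀ k, mom A k = mom B k := by
  have hlt : ∀ j, j < n → mom A j = mom B j := by
    intro j
    induction j using Nat.strong_induction_on with
    | _ j ih =>
      intro hj
      have hc := hd (n - 1 - j) (by omega)
      rw [dot_Dmat, dot_Dmat, show n - (n - 1 - j) = j + 1 by omega,
        Finset.sum_range_succ, Finset.sum_range_succ,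
        show n - 1 - j + 1 + j = n by omega, coeff_top, coeff_top, one_mul, one_mul] at hc
      have hs : ∑ i ∈ Finset.range j, A.charpoly.coeff (n - 1 - j + 1 + i) * mom A i
          = ∑ i ∈ Finset.range j, B.charpoly.coeff (n - 1 - j + 1 + i) * mom B i := by
        refine Finset.sum_congr rfl fun i hi => ?_
        have hij := Finset.mem_range.mp hi
        rw [hp, ih i hij (by omega)]
      rw [hs] at hc
      linarith
  intro k
  induction k using Nat.strong_induction_on with
  | _ k ih =>
    rcases lt_or_ge k n with h | h
    · exact hlt k h
    · rcases Nat.eq_zero_or_pos n with h0 | h0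
      · subst h0
        rw [show k = k + 0 by omega, momrec, momrec]
        simp
      · rw [show k = (k - n) + n by omega, momrec, momrec, hp]
        congr 1
        refine Finset.sum_congr rfl fun i hi => ?_
        have hij := Finset.mem_range.mp hi
        rw [ih (k - n + i) (by omega)]

lemma dotaux (A : Matrix (Fin n) (Fin n) ℝ) (hA : Aᵀ = A) (a b : ℕ) :
    ((A ^ a) *ᵥ (1 : Fin n → ℝ)) ⬝ᵥ ((A ^ b) *ᵥ (1 : Fin n → ℝ)) = mom A (a + b) := by
  have hp : (A ^ a)ᵀ = A ^ a := by rw [Matrix.transpose_pow, hA]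
  have hv : (1 : Fin n → ℝ) ᵥ* A ^ a = (A ^ a) *ᵥ (1 : Fin n → ℝ) := by
    conv_lhs => rw [← hp]
    exact Matrix.vecMul_transpose _ _
  rw [mom, pow_add, ← Matrix.mulVec_mulVec]
  conv_rhs => rw [dotProduct_mulVec, hv]

lemma wTw (A : Matrix (Fin n) (Fin n) ℝ) (hA : Aᵀ = A) (i j : Fin n) :
    ((walkMatrix A)ᵀ * walkMatrix A) i j = mom A ((i : ℕ) + j) := by
  rw [Matrix.mul_apply, ← dotaux A hA]
  rfl

lemma wAw (A : Matrix (Fin n) (Fin n) ℝ) (hA : Aᵀ = A) (i j : Fin n) :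
    ((walkMatrix A)ᵀ * (A * walkMatrix A)) i j = mom A ((i : ℕ) + j + 1) := by
  rw [Matrix.mul_apply, show (i : ℕ) + j + 1 = i + (j + 1) by omega, ← dotaux A hA]
  have hcol : ∀ k, (A * walkMatrix A) k j = ((A ^ ((j : ℕ) + 1)) *ᵥ (1 : Fin n → ℝ)) k := by
    intro k
    rw [pow_succ']
    rw [← Matrix.mulVec_mulVec]
    rfl
  simp only [dotProduct]
  refine Finset.sum_congr rfl fun k _ => ?_
  rw [hcol k]
  rfl

theorem final_alg (A B : Matrix (Fin n) (Fin n) ℝ)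
    (hA : Aᵀ = A) (hB : Bᵀ = B)
    (hm : ∀ k, mom A k = mom B k)
    (hG : IsUnit (walkMatrix A)) (hH : IsUnit (walkMatrix B)) :
    (walkMatrix B * (walkMatrix A)⁻¹) * A * (walkMatrix B * (walkMatrix A)⁻¹)ᵀ = B ∧
    (walkMatrix B * (walkMatrix A)⁻¹) *ᵥ (1 : Fin n → ℝ) = (1 : Fin n → ℝ) := by
  set WG := walkMatrix A with hWG
  set WH := walkMatrix B with hWH
  set Q := WH * WG⁻¹ with hQ
  have hdG : IsUnit WG.det := (Matrix.isUnit_iff_isUnit_det _).mp hG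
  have hGi : WG * WG⁻¹ = 1 := Matrix.mul_nonsing_inv _ hdG
  have hiG : WG⁻¹ * WG = 1 := Matrix.nonsing_inv_mul _ hdG
  have ht : (WG⁻¹)ᵀ * WGᵀ = 1 := by rw [← Matrix.transpose_mul, hGi, Matrix.transpose_one]
  have h1 : WHᵀ * WH = WGᵀ * WG := by
    ext i j
    rw [hWG, hWH, wTw A hA, wTw B hB, hm]
  have h2 : WHᵀ * (B * WH) = WGᵀ * (A * WG) := by
    ext i j
    rw [hWG, hWH, wAw A hA, wAw B hB, hm]
  have hQtQ : Qᵀ * Q = 1 := by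
    rw [hQ, Matrix.transpose_mul]
    calc (WG⁻¹)ᵀ * WHᵀ * (WH * WG⁻¹) = (WG⁻¹)ᵀ * (WHᵀ * WH) * WG⁻¹ := by
          simp only [Matrix.mul_assoc]
      _ = (WG⁻¹)ᵀ * (WGᵀ * WG) * WG⁻¹ := by rw [h1]
      _ = ((WG⁻¹)ᵀ * WGᵀ) * (WG * WG⁻¹) := by
          simp only [Matrix.mul_assoc]
      _ = 1 := by rw [ht, hGi, one_mul]
  have hQQt : Q * Qᵀ = 1 := mul_eq_one_comm.mp hQtQ
  have hAeq : A = Qᵀ * B * Q := by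
    rw [hQ, Matrix.transpose_mul]
    calc A = ((WG⁻¹)ᵀ * WGᵀ) * A * (WG * WG⁻¹) := by rw [ht, hGi, one_mul, mul_one]
      _ = (WG⁻¹)ᵀ * (WGᵀ * (A * WG)) * WG⁻¹ := by
          simp only [Matrix.mul_assoc]
      _ = (WG⁻¹)ᵀ * (WHᵀ * (B * WH)) * WG⁻¹ := by rw [h2]
      _ = (WG⁻¹)ᵀ * WHᵀ * B * (WH * WG⁻¹) := by
          simp only [Matrix.mul_assoc]
  constructor
  · calc Q * A * Qᵀ = Q * (Qᵀ * B * Q) * Qᵀ := by rw [← hAeq]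
      _ = (Q * Qᵀ) * B * (Q * Qᵀ) := by
        simp only [Matrix.mul_assoc]
      _ = B := by rw [hQQt, one_mul, mul_one]
  · rcases Nat.eq_zero_or_pos n with h0 | h0
    · subst h0
      funext i
      exact i.elim0
    · obtain ⟨m, rfl⟩ : ∃ m, n = m + 1 := ⟨n - 1, by omega⟩
      have hWe : ∀ (M : Matrix (Fin (m+1)) (Fin (m+1)) ℝ),
          walkMatrix M *ᵥ Pi.single (0 : Fin (m+1)) (1:ℝ) = 1 := by
        intro M
        funext i
        rw [Matrix.mulVec_single]
        show walkMatrix M i 0 * 1 = 1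
        simp [walkMatrix]
      calc Q *ᵥ (1 : Fin (m+1) → ℝ) = Q *ᵥ (WG *ᵥ Pi.single (0 : Fin (m+1)) 1) := by
            rw [hWe A]
        _ = (Q * WG) *ᵥ Pi.single (0 : Fin (m+1)) 1 := by rw [Matrix.mulVec_mulVec]
        _ = WH *ᵥ Pi.single (0 : Fin (m+1)) 1 := by
            rw [hQ, Matrix.mul_assoc, hiG, mul_one]
        _ = 1 := hWe B

end GCAux

/-- For generalized cospectral controllable graphs, `Q = W_H W_G⁻¹` satisfies
`QAQᵀ = B` and `Q𝟙 = 𝟙`. -/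
theorem generalizedCospectral_controllable_Q {n : ℕ}
    (G H : SimpleGraph (Fin n)) [DecidableRel G.Adj] [DecidableRel H.Adj]
    (hG : IsUnit (walkMatrix (G.adjMatrix ℝ)))
    (hH : IsUnit (walkMatrix (H.adjMatrix ℝ)))
    (hgc : ∀ s : ℝ, (G.adjMatrix ℝ + s • allOnes n).charpoly =
        (H.adjMatrix ℝ + s • allOnes n).charpoly) :
    (walkMatrix (H.adjMatrix ℝ) * (walkMatrix (G.adjMatrix ℝ))⁻¹) * G.adjMatrix ℝ *
        (walkMatrix (H.adjMatrix ℝ) * (walkMatrix (G.adjMatrix ℝ))⁻¹)ᵀ = H.adjMatrix ℝ ∧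
    (walkMatrix (H.adjMatrix ℝ) * (walkMatrix (G.adjMatrix ℝ))⁻¹) *ᵥ (1 : Fin n → ℝ) =
        (1 : Fin n → ℝ) := by
  classical
  set A := G.adjMatrix ℝ with hA
  set B := H.adjMatrix ℝ with hB
  have hAs : Aᵀ = A := G.transpose_adjMatrix
  have hBs : Bᵀ = B := H.transpose_adjMatrix
  have hp : A.charpoly = B.charpoly := by
    have := hgc 0
    simpa using this
  have hPA : (A + allOnes n).charpoly = A.charpoly - GCAux.Phi A :=
    GCAux.main_det A (GCAux.Nmat A) (GCAux.charmatrix_mul_Nmat A) (GCAux.Phi A) rfl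
  have hPB : (B + allOnes n).charpoly = B.charpoly - GCAux.Phi B :=
    GCAux.main_det B (GCAux.Nmat B) (GCAux.charmatrix_mul_Nmat B) (GCAux.Phi B) rfl
  have hgc1 := hgc 1
  rw [one_smul] at hgc1
  have hPhi : GCAux.Phi A = GCAux.Phi B := by
    rw [hPA, hPB, hp] at hgc1
    exact sub_right_inj.mp hgc1
  have hmom : ∀ k, GCAux.mom A k = GCAux.mom B k := by
    refine GCAux.mom_eq_of A B hp fun k hk => ?_
    rw [← GCAux.Phi_coeff A hk, ← GCAux.Phi_coeff B hk, hPhi]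
  exact GCAux.final_alg A B hAs hBs hmom hG hH
end

section
/- Let G and H be controllable simple graphs on n vertices with real adjacency matrices A and B and walk matrices W_G and W_H. Suppose G and H are walk-equivalent (𝟙ᵀAʳ𝟙 = 𝟙ᵀBʳ𝟙 for all r ≥ 0) and there exists a permutation matrix P with PW_G = W_H. Then PAPᵀ = B; in particular G and H are isomorphic. -/
/-!
Since `A` is symmetric, `W_Gᵀ A W_G` has entries `𝟙ᵀ A^(i+j+1) 𝟙`, and likewise for `H`, so
walk-equivalence of `G` and `H` gives `W_Gᵀ A W_G = W_Hᵀ B W_H`. Substituting `W_H = P W_G` and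
cancelling the invertible `W_G` yields `Pᵀ B P = A`, hence `P A Pᵀ = B` since `P` is orthogonal.
Read entrywise, `P A Pᵀ = B` says that the permutation is a graph isomorphism.
-/

open Matrix

theorem walkMatrix_transpose_apply {n : ℕ} (A : Matrix (Fin n) (Fin n) ℝ) (i : Fin n) :
    (walkMatrix A)ᵀ i = A ^ (i : ℕ) *ᵥ 1 :=
  rfl

theorem walkMatrix_transpose_mul_pow_mul_walkMatrix {n : ℕ} {A : Matrix (Fin n) (Fin n) ℝ}
    (hA : A.IsSymm) (k : ℕ) :
    (walkMatrix A)ᵀ * A ^ k * walkMatrix A =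
      of fun i j : Fin n => 1 ⬝ᵥ (A ^ (i + k + j : ℕ) *ᵥ 1) := by
  ext i j
  rw [mul_mul_apply, walkMatrix_transpose_apply, walkMatrix_transpose_apply,
    ← (hA.pow i).eq, mulVec_transpose, ← dotProduct_mulVec, mulVec_mulVec, mulVec_mulVec,
    ← pow_add, ← pow_add, of_apply]

theorem transpose_mul_mul_eq_of_mul_walkMatrix_eq {n : ℕ} {A B P : Matrix (Fin n) (Fin n) ℝ}
    (hA : A.IsSymm) (hB : B.IsSymm) (hW : IsUnit (walkMatrix A))
    (hwalk : ∀ r : ℕ, (1 : Fin n → ℝ) ⬝ᵥ (A ^ r *ᵥ 1) = 1 ⬝ᵥ (B ^ r *ᵥ 1))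
    (hPW : P * walkMatrix A = walkMatrix B) :
    Pᵀ * B * P = A := by
  have hmoments : (walkMatrix A)ᵀ * A * walkMatrix A = (walkMatrix B)ᵀ * B * walkMatrix B := by
    have hA1 := walkMatrix_transpose_mul_pow_mul_walkMatrix hA 1
    have hB1 := walkMatrix_transpose_mul_pow_mul_walkMatrix hB 1
    rw [pow_one] at hA1 hB1
    simp only [hA1, hB1, hwalk]
  rw [← hPW, transpose_mul] at hmoments
  have hcancel : (walkMatrix A)ᵀ * (A * walkMatrix A) =
      (walkMatrix A)ᵀ * ((Pᵀ * B * P) * walkMatrix A) := by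
    simpa only [Matrix.mul_assoc] using hmoments
  exact (hW.mul_right_cancel (((isUnit_transpose _).mpr hW).mul_left_cancel hcancel)).symm

theorem Equiv.Perm.permMatrix_mul_transpose {m R : Type*} [DecidableEq m] [Fintype m]
    [NonAssocSemiring R] (σ : Equiv.Perm m) :
    σ.permMatrix R * (σ.permMatrix R)ᵀ = 1 := by
  rw [transpose_permMatrix, ← permMatrix_mul, inv_mul_cancel, permMatrix_one]

theorem Equiv.Perm.permMatrix_mul_mul_transpose {m R : Type*} [DecidableEq m] [Fintype m]
    [NonAssocSemiring R] (σ : Equiv.Perm m) (A : Matrix m m R) :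
    σ.permMatrix R * A * (σ.permMatrix R)ᵀ = A.submatrix σ σ := by
  rw [transpose_permMatrix, Equiv.Perm.permMatrix, PEquiv.toMatrix_toPEquiv_mul,
    Equiv.Perm.permMatrix, PEquiv.mul_toMatrix_toPEquiv, Equiv.Perm.inv_def, Equiv.symm_symm,
    submatrix_submatrix]
  rfl

def SimpleGraph.Iso.ofSubmatrixAdjMatrix {V W α : Type*} [Zero α] [One α] [NeZero (1 : α)]
    {G : SimpleGraph V} {H : SimpleGraph W} [DecidableRel G.Adj] [DecidableRel H.Adj]
    (e : W ≃ V) (h : (G.adjMatrix α).submatrix e e = H.adjMatrix α) : H ≃g G where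
  toEquiv := e
  map_rel_iff' {a b} := by
    have := congrFun₂ h a b
    simp only [submatrix_apply, SimpleGraph.adjMatrix_apply] at this
    split_ifs at this <;> simp_all

theorem controllable_walkEquiv_perm_isomorphic_general {n : ℕ}
    (G H : SimpleGraph (Fin n)) [DecidableRel G.Adj] [DecidableRel H.Adj]
    (hG : IsUnit (walkMatrix (G.adjMatrix ℝ)))
    (hwalk : ∀ r : ℕ, (1 : Fin n → ℝ) ⬝ᵥ (((G.adjMatrix ℝ) ^ r) *ᵥ (1 : Fin n → ℝ)) =
        (1 : Fin n → ℝ) ⬝ᵥ (((H.adjMatrix ℝ) ^ r) *ᵥ (1 : Fin n → ℝ)))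
    (P : Matrix (Fin n) (Fin n) ℝ)
    (hP : ∃ σ : Equiv.Perm (Fin n), P = σ.permMatrix ℝ)
    (hPW : P * walkMatrix (G.adjMatrix ℝ) = walkMatrix (H.adjMatrix ℝ)) :
    P * G.adjMatrix ℝ * Pᵀ = H.adjMatrix ℝ ∧ Nonempty (G ≃g H) := by
  obtain ⟨σ, rfl⟩ := hP
  have hconj : (σ.permMatrix ℝ)ᵀ * H.adjMatrix ℝ * σ.permMatrix ℝ = G.adjMatrix ℝ :=
    transpose_mul_mul_eq_of_mul_walkMatrix_eq G.isSymm_adjMatrix H.isSymm_adjMatrix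
      hG hwalk hPW
  have hiso : σ.permMatrix ℝ * G.adjMatrix ℝ * (σ.permMatrix ℝ)ᵀ = H.adjMatrix ℝ := by
    rw [← hconj]
    simp only [← Matrix.mul_assoc, σ.permMatrix_mul_transpose, Matrix.one_mul]
    rw [Matrix.mul_assoc, σ.permMatrix_mul_transpose, Matrix.mul_one]
  refine ⟨hiso, ⟨(SimpleGraph.Iso.ofSubmatrixAdjMatrix (α := ℝ) σ ?_).symm⟩⟩
  rw [← σ.permMatrix_mul_mul_transpose, hiso]

/-- If two controllable graphs are walk-equivalent and a permutation matrix maps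
one walk matrix onto the other, then the graphs are isomorphic via that permutation. -/
theorem controllable_walkEquiv_perm_isomorphic {n : ℕ}
    (G H : SimpleGraph (Fin n)) [DecidableRel G.Adj] [DecidableRel H.Adj]
    (hG : IsUnit (walkMatrix (G.adjMatrix ℝ)))
    (hH : IsUnit (walkMatrix (H.adjMatrix ℝ)))
    (hwalk : ∀ r : ℕ, (1 : Fin n → ℝ) ⬝ᵥ (((G.adjMatrix ℝ) ^ r) *ᵥ (1 : Fin n → ℝ)) =
        (1 : Fin n → ℝ) ⬝ᵥ (((H.adjMatrix ℝ) ^ r) *ᵥ (1 : Fin n → ℝ)))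
    (P : Matrix (Fin n) (Fin n) ℝ)
    (hP : ∃ σ : Equiv.Perm (Fin n), P = σ.permMatrix ℝ)
    (hPW : P * walkMatrix (G.adjMatrix ℝ) = walkMatrix (H.adjMatrix ℝ)) :
    P * G.adjMatrix ℝ * Pᵀ = H.adjMatrix ℝ ∧ Nonempty (G ≃g H) :=
  controllable_walkEquiv_perm_isomorphic_general G H hG hwalk P hP hPW
end

section
/- Let G and H be controllable simple graphs on n vertices with real adjacency matrices A and B, walk matrices W_G, W_H, and suppose A and B have equal characteristic polynomials. If there exists a permutation matrix P with PW_G = W_H, then PAPᵀ = B; in particular G and H are isomorphic. -/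
open Matrix

lemma pow_card_eq_sum {n : ℕ} (A : Matrix (Fin n) (Fin n) ℝ) :
    A ^ n = ∑ i ∈ Finset.range n, (-(A.charpoly.coeff i)) • A ^ i := by
  have h0 := Matrix.aeval_self_charpoly A
  have hdeg : A.charpoly.natDegree = n := by simp
  have hc := A.charpoly_monic.coeff_natDegree
  rw [hdeg] at hc
  rw [A.charpoly.as_sum_range_C_mul_X_pow, map_sum, hdeg, Finset.sum_range_succ, hc] at h0
  simp only [_root_.map_mul, Polynomial.aeval_C, map_pow, Polynomial.aeval_X, _root_.map_one,
    one_mul] at h0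
  have h1 := eq_neg_of_add_eq_zero_right h0
  rw [h1, ← Finset.sum_neg_distrib]
  refine Finset.sum_congr rfl fun i _ => ?_
  rw [Algebra.smul_def, map_neg, neg_mul]

lemma mul_walkMatrix {n : ℕ} (M A : Matrix (Fin n) (Fin n) ℝ) :
    M * walkMatrix A = Matrix.of (fun (i j : Fin n) => ((M * A ^ (j : ℕ)) *ᵥ (1 : Fin n → ℝ)) i) := by
  ext i j
  simp only [walkMatrix, Matrix.mul_apply, Matrix.of_apply, Matrix.mulVec, dotProduct,
    Pi.one_apply, mul_one, Finset.mul_sum]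
  rw [Finset.sum_comm]

/-- If two controllable cospectral graphs have walk matrices related by a
permutation matrix, then the graphs are isomorphic via that permutation. -/
theorem controllable_cospectral_perm_isomorphic {n : ℕ}
    (G H : SimpleGraph (Fin n)) [DecidableRel G.Adj] [DecidableRel H.Adj]
    (hG : IsUnit (walkMatrix (G.adjMatrix ℝ)))
    (hH : IsUnit (walkMatrix (H.adjMatrix ℝ)))
    (hcospec : (G.adjMatrix ℝ).charpoly = (H.adjMatrix ℝ).charpoly)
    (P : Matrix (Fin n) (Fin n) ℝ)
    (hP : ∃ σ : Equiv.Perm (Fin n), P = σ.permMatrix ℝ)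
    (hPW : P * walkMatrix (G.adjMatrix ℝ) = walkMatrix (H.adjMatrix ℝ)) :
    P * G.adjMatrix ℝ * Pᵀ = H.adjMatrix ℝ ∧ Nonempty (G ≃g H) := by
  obtain ⟨σ, rfl⟩ := hP
  set A := G.adjMatrix ℝ with hA
  set B := H.adjMatrix ℝ with hB
  set P := σ.permMatrix ℝ with hPdef
  -- column-wise consequence of hPW
  have hcol : ∀ k : ℕ, k < n → (P * A ^ k) *ᵥ (1 : Fin n → ℝ) = B ^ k *ᵥ 1 := by
    intro k hk
    have h := hPW
    rw [mul_walkMatrix] at h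
    funext i
    have := congrFun (congrFun h i) ⟨k, hk⟩
    simpa [walkMatrix] using this
  have hsum : ∀ (s : Finset ℕ) (M : ℕ → Matrix (Fin n) (Fin n) ℝ),
      (∑ i ∈ s, M i) *ᵥ (1 : Fin n → ℝ) = ∑ i ∈ s, (M i) *ᵥ 1 :=
    fun s M => map_sum (mulVec.addMonoidHomLeft (1 : Fin n → ℝ)) M s
  have hcoln : (P * A ^ n) *ᵥ (1 : Fin n → ℝ) = B ^ n *ᵥ 1 := by
    rw [pow_card_eq_sum A, pow_card_eq_sum B, ← hcospec, Finset.mul_sum]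
    have h1 : ∀ i : ℕ, P * ((-(A.charpoly.coeff i)) • A ^ i)
        = (-(A.charpoly.coeff i)) • (P * A ^ i) := fun i => mul_smul_comm _ _ _
    simp only [h1]
    rw [hsum, hsum]
    refine Finset.sum_congr rfl fun i hi => ?_
    rw [smul_mulVec, smul_mulVec, hcol i (Finset.mem_range.mp hi)]
  -- all powers up to n
  have hcol' : ∀ k : ℕ, k ≤ n → (P * A ^ k) *ᵥ (1 : Fin n → ℝ) = B ^ k *ᵥ 1 := by
    intro k hk
    rcases lt_or_eq_of_le hk with h | h
    · exact hcol k h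
    · subst h; exact hcoln
  -- key identity
  have hmain : P * A * walkMatrix A = B * (P * walkMatrix A) := by
    rw [hPW, mul_walkMatrix, mul_walkMatrix]
    ext i j
    simp only [Matrix.of_apply]
    have e1 : P * A * A ^ (j : ℕ) = P * A ^ ((j : ℕ) + 1) := by
      rw [mul_assoc, ← pow_succ']
    have e2 : B * B ^ (j : ℕ) = B ^ ((j : ℕ) + 1) := (pow_succ' B _).symm
    rw [e1, e2, hcol' ((j : ℕ) + 1) j.isLt]
  -- cancel the walk matrix
  obtain ⟨U, hU⟩ := hG
  have hW1 : walkMatrix A * (↑U⁻¹ : Matrix (Fin n) (Fin n) ℝ) = 1 := by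
    rw [← hU]; exact U.mul_inv
  have hPA : P * A = B * P := by
    have h2 := congrArg (· * (↑U⁻¹ : Matrix (Fin n) (Fin n) ℝ)) hmain
    simp only [mul_assoc] at h2
    rw [hW1, mul_one, mul_one] at h2
    exact h2
  -- permutation matrix facts
  have hPPT : P * Pᵀ = 1 := by
    rw [hPdef, Matrix.transpose_permMatrix, ← Matrix.permMatrix_mul, inv_mul_cancel,
      Matrix.permMatrix_one]
  have hfinal : P * A * Pᵀ = B := by
    rw [hPA, mul_assoc, hPPT, mul_one]
  refine ⟨hfinal, ?_⟩
  -- entries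
  have hsub : A.submatrix σ σ = B := by
    rw [← hfinal, hPdef]
    rw [Equiv.Perm.permMatrix, PEquiv.toMatrix_toPEquiv_mul]
    have : (σ.toPEquiv.toMatrix : Matrix (Fin n) (Fin n) ℝ)ᵀ
        = (σ.symm.toPEquiv.toMatrix : Matrix (Fin n) (Fin n) ℝ) := by
      rw [Equiv.toPEquiv_symm, PEquiv.toMatrix_symm]
    rw [this, PEquiv.mul_toMatrix_toPEquiv, Equiv.symm_symm]
    rfl
  refine ⟨⟨σ.symm, ?_⟩⟩
  intro a b
  have h := congrFun (congrFun hsub (σ.symm a)) (σ.symm b)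
  simp only [Matrix.submatrix_apply, Equiv.apply_symm_apply, hA, hB,
    SimpleGraph.adjMatrix_apply] at h
  constructor
  · intro hadj
    by_contra hg
    simp [hg, hadj] at h
  · intro hg
    by_contra hadj
    simp [hg, hadj] at h
end

section
/- Let G and H be controllable simple graphs on n vertices with real adjacency matrices A and B and extended walk matrices Ŵ_G = [𝟙, A𝟙, ..., Aⁿ𝟙] and Ŵ_H = [𝟙, B𝟙, ..., Bⁿ𝟙]. If there exists a permutation matrix P with PŴ_G = Ŵ_H, then PAPᵀ = B; in particular G and H are isomorphic. -/
open Matrix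

/-- The extended walk matrix of a graph with adjacency matrix `A` on `n` vertices. -/
noncomputable def extWalkMatrix {n : ℕ} (A : Matrix (Fin n) (Fin n) ℝ) :
    Matrix (Fin n) (Fin (n + 1)) ℝ :=
  Matrix.of fun i j => ((A ^ (j : ℕ)) *ᵥ (1 : Fin n → ℝ)) i

/-!
Columns `0, …, n - 1` of the extended walk matrix `Ŵ` form the walk matrix `W`, and columns
`1, …, n` form `A * W`. Hence `P * Ŵ_G = Ŵ_H` gives both `P * W_G = W_H` and
`P * A * W_G = B * W_H = B * P * W_G`; cancelling the invertible `W_G` yields `P * A = B * P`,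
that is `P * A * Pᵀ = B`, and a permutation matrix conjugating adjacency matrices is a graph
isomorphism.
-/

theorem Matrix.mul_submatrix_id_left {l m n o R : Type*} [Fintype m] [Mul R] [AddCommMonoid R]
    (M : Matrix l m R) (N : Matrix m n R) (f : o → n) :
    M * N.submatrix id f = (M * N).submatrix id f :=
  (submatrix_mul M N id id f Function.bijective_id).symm

theorem Matrix.permMatrix_mul_mul_transpose_permMatrix {n R : Type*} [Fintype n] [DecidableEq n]
    [NonAssocSemiring R] (σ : Equiv.Perm n) (A : Matrix n n R) :
    σ.permMatrix R * A * (σ.permMatrix R)ᵀ = A.submatrix σ σ := by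
  rw [transpose_permMatrix, PEquiv.toMatrix_toPEquiv_mul, PEquiv.mul_toMatrix_toPEquiv,
    submatrix_submatrix]
  rfl

theorem Matrix.permMatrix_mul_transpose_permMatrix {n R : Type*} [Fintype n] [DecidableEq n]
    [NonAssocSemiring R] (σ : Equiv.Perm n) :
    σ.permMatrix R * (σ.permMatrix R)ᵀ = 1 := by
  rw [transpose_permMatrix, ← permMatrix_mul, inv_mul_cancel, permMatrix_one]

def SimpleGraph.Iso.ofAdjMatrixEqSubmatrix {V W α : Type*} [MulZeroOneClass α] [Nontrivial α]
    {G : SimpleGraph V} {H : SimpleGraph W} [DecidableRel G.Adj] [DecidableRel H.Adj]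
    (σ : W ≃ V) (h : H.adjMatrix α = (G.adjMatrix α).submatrix σ σ) : H ≃g G where
  toEquiv := σ
  map_rel_iff' {a b} := by
    have hab := congrFun (congrFun h a) b
    simp only [adjMatrix_apply, submatrix_apply] at hab
    by_cases hG : G.Adj (σ a) (σ b) <;> by_cases hH : H.Adj a b <;> simp_all

section WalkMatrix

variable {n : ℕ}

theorem walkMatrix_eq_submatrix_castSucc (A : Matrix (Fin n) (Fin n) ℝ) :
    walkMatrix A = (extWalkMatrix A).submatrix id Fin.castSucc :=
  rfl

theorem mul_walkMatrix_eq_submatrix_succ (A : Matrix (Fin n) (Fin n) ℝ) :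
    A * walkMatrix A = (extWalkMatrix A).submatrix id Fin.succ := by
  ext i j
  simp only [walkMatrix, extWalkMatrix, submatrix_apply, of_apply, id, Fin.val_succ, pow_succ',
    ← mulVec_mulVec]
  rfl

theorem mul_eq_mul_of_mul_extWalkMatrix_eq {A B P : Matrix (Fin n) (Fin n) ℝ}
    (hA : IsUnit (walkMatrix A)) (h : P * extWalkMatrix A = extWalkMatrix B) :
    P * A = B * P := by
  have hW : P * walkMatrix A = walkMatrix B := by
    rw [walkMatrix_eq_submatrix_castSucc, walkMatrix_eq_submatrix_castSucc,
      mul_submatrix_id_left, h]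
  refine hA.mul_left_inj.mp ?_
  calc P * A * walkMatrix A = (P * extWalkMatrix A).submatrix id Fin.succ := by
        rw [mul_assoc, mul_walkMatrix_eq_submatrix_succ, mul_submatrix_id_left]
    _ = B * (P * walkMatrix A) := by rw [h, hW, mul_walkMatrix_eq_submatrix_succ]
    _ = B * P * walkMatrix A := (mul_assoc _ _ _).symm

end WalkMatrix

theorem controllable_perm_extWalkMatrix_isomorphic_general {n : ℕ}
    (G H : SimpleGraph (Fin n)) [DecidableRel G.Adj] [DecidableRel H.Adj]
    (hG : IsUnit (walkMatrix (G.adjMatrix ℝ)))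
    (P : Matrix (Fin n) (Fin n) ℝ)
    (hP : ∃ σ : Equiv.Perm (Fin n), P = σ.permMatrix ℝ)
    (hPW : P * extWalkMatrix (G.adjMatrix ℝ) = extWalkMatrix (H.adjMatrix ℝ)) :
    P * G.adjMatrix ℝ * Pᵀ = H.adjMatrix ℝ ∧ Nonempty (G ≃g H) := by
  obtain ⟨σ, rfl⟩ := hP
  have hconj : σ.permMatrix ℝ * G.adjMatrix ℝ * (σ.permMatrix ℝ)ᵀ = H.adjMatrix ℝ := by
    rw [mul_eq_mul_of_mul_extWalkMatrix_eq hG hPW, mul_assoc,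
      permMatrix_mul_transpose_permMatrix, mul_one]
  refine ⟨hconj, ⟨(SimpleGraph.Iso.ofAdjMatrixEqSubmatrix (α := ℝ) σ ?_).symm⟩⟩
  rw [← hconj, permMatrix_mul_mul_transpose_permMatrix]

/-- If two controllable graphs have extended walk matrices equal up to a permutation
of the rows, then the graphs are isomorphic via that permutation. -/
theorem controllable_perm_extWalkMatrix_isomorphic {n : ℕ}
    (G H : SimpleGraph (Fin n)) [DecidableRel G.Adj] [DecidableRel H.Adj]
    (hG : IsUnit (walkMatrix (G.adjMatrix ℝ)))
    (hH : IsUnit (walkMatrix (H.adjMatrix ℝ)))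
    (P : Matrix (Fin n) (Fin n) ℝ)
    (hP : ∃ σ : Equiv.Perm (Fin n), P = σ.permMatrix ℝ)
    (hPW : P * extWalkMatrix (G.adjMatrix ℝ) = extWalkMatrix (H.adjMatrix ℝ)) :
    P * G.adjMatrix ℝ * Pᵀ = H.adjMatrix ℝ ∧ Nonempty (G ≃g H) :=
  controllable_perm_extWalkMatrix_isomorphic_general G H hG P hP hPW
end

section
/- Let G and H be controllable simple graphs on n vertices with real adjacency matrices A and B. Then G and H are fractionally isomorphic (there exists a doubly stochastic n×n matrix S with SA = BS) if and only if G and H are isomorphic (there exists a permutation matrix P with PAPᵀ = B). -/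
open Matrix

/-- A real square matrix is doubly stochastic if its entries are nonnegative and
every row and every column sums to 1. -/
def IsDoublyStochastic {n : ℕ} (S : Matrix (Fin n) (Fin n) ℝ) : Prop :=
  (∀ i j, 0 ≤ S i j) ∧ (∀ i, ∑ j, S i j = 1) ∧ (∀ j, ∑ i, S i j = 1)

-- aux: intertwiner maps walk matrices
lemma walk_intertwine {n : ℕ} {S A B : Matrix (Fin n) (Fin n) ℝ}
    (h : S * A = B * S) (h1 : S *ᵥ 1 = 1) :
    S * walkMatrix A = walkMatrix B := by
  have hpow : ∀ k, S * A ^ k = B ^ k * S := by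
    intro k
    induction k with
    | zero => simp
    | succ k ih =>
      rw [pow_succ, ← mul_assoc, ih, mul_assoc, h, ← mul_assoc, ← pow_succ]
  ext i j
  have : (S * walkMatrix A) i j = (S *ᵥ ((A ^ (j:ℕ)) *ᵥ 1)) i := by
    simp [walkMatrix, Matrix.mul_apply, mulVec, dotProduct, Finset.mul_sum, mul_assoc]
  rw [this, mulVec_mulVec, hpow, ← mulVec_mulVec, h1]
  rfl

lemma permMatrix_apply {n : ℕ} (σ : Equiv.Perm (Fin n)) (i j : Fin n) :
    (σ.permMatrix ℝ) i j = if σ i = j then 1 else 0 := by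
  simp only [Equiv.Perm.permMatrix, PEquiv.toMatrix_apply, Equiv.toPEquiv_apply, Option.mem_some_iff]

/-- Two controllable graphs are fractionally isomorphic iff they are isomorphic. -/
theorem controllable_fractionallyIsomorphic_iff_isomorphic {n : ℕ}
    (G H : SimpleGraph (Fin n)) [DecidableRel G.Adj] [DecidableRel H.Adj]
    (hG : IsUnit (walkMatrix (G.adjMatrix ℝ)))
    (hH : IsUnit (walkMatrix (H.adjMatrix ℝ))) :
    (∃ S : Matrix (Fin n) (Fin n) ℝ, IsDoublyStochastic S ∧
      S * G.adjMatrix ℝ = H.adjMatrix ℝ * S) ↔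
    (∃ σ : Equiv.Perm (Fin n),
      (σ.permMatrix ℝ) * G.adjMatrix ℝ * (σ.permMatrix ℝ)ᵀ = H.adjMatrix ℝ) := by
  set A := G.adjMatrix ℝ with hA
  set B := H.adjMatrix ℝ with hB
  constructor
  · rintro ⟨S, ⟨hpos, hrow, hcol⟩, hSA⟩
    -- S is orthogonal
    have hS1 : S *ᵥ 1 = 1 := by
      funext i; simpa [mulVec, dotProduct] using hrow i
    have hST1 : Sᵀ *ᵥ 1 = 1 := by
      funext j; simpa [mulVec, dotProduct] using hcol j
    have hSW : S * walkMatrix A = walkMatrix B := walk_intertwine hSA hS1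
    have hTB : Sᵀ * B = A * Sᵀ := by
      have := congrArg Matrix.transpose hSA
      simpa [Matrix.transpose_mul, hA, hB] using this.symm
    have hSTW : Sᵀ * walkMatrix B = walkMatrix A := walk_intertwine hTB hST1
    have hWG : Sᵀ * S * walkMatrix A = walkMatrix A := by
      rw [mul_assoc, hSW, hSTW]
    obtain ⟨u, hu⟩ := hG
    have horth : Sᵀ * S = 1 := by
      calc Sᵀ * S = Sᵀ * S * (walkMatrix A * ↑u⁻¹) := by
            rw [← hu, Units.mul_inv, mul_one]
        _ = (Sᵀ * S * walkMatrix A) * ↑u⁻¹ := by noncomm_ring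
        _ = walkMatrix A * ↑u⁻¹ := by rw [hWG]
        _ = 1 := by rw [← hu, Units.mul_inv]
    have horth' : S * Sᵀ = 1 := mul_eq_one_comm.mp horth
    -- entries are 0 or 1
    have hle : ∀ i j, S i j ≤ 1 := by
      intro i j
      calc S i j ≤ ∑ k, S i k :=
            Finset.single_le_sum (fun k _ => hpos i k) (Finset.mem_univ j)
        _ = 1 := hrow i
    have hsq : ∀ i, ∑ j, S i j * S i j = 1 := by
      intro i
      have := congrFun (congrFun horth' i) i
      simpa [Matrix.mul_apply, Matrix.transpose_apply] using this
    have h01 : ∀ i j, S i j = 0 ∨ S i j = 1 := by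
      intro i j
      have hzero : ∑ k, (S i k - S i k * S i k) = 0 := by
        rw [Finset.sum_sub_distrib, hrow i, hsq i, sub_self]
      have hnn : ∀ k ∈ Finset.univ, 0 ≤ S i k - S i k * S i k := by
        intro k _
        have := mul_le_of_le_one_right (hpos i k) (hle i k)
        linarith
      have := (Finset.sum_eq_zero_iff_of_nonneg hnn).mp hzero j (Finset.mem_univ j)
      have hfac : S i j * (1 - S i j) = 0 := by ring_nf; linarith
      rcases mul_eq_zero.mp hfac with h | h
      · exact Or.inl h
      · right; linarith
    -- extract the permutation
    have hex : ∀ i, ∃ j, S i j = 1 := by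
      intro i
      by_contra hc
      push_neg at hc
      have : ∀ j ∈ Finset.univ, S i j = 0 := fun j _ =>
        (h01 i j).resolve_right (hc j)
      have := Finset.sum_eq_zero this
      rw [hrow i] at this
      norm_num at this
    choose f hf using hex
    have hrowunique : ∀ i j, j ≠ f i → S i j = 0 := by
      intro i j hj
      by_contra hne
      have hSij : S i j = 1 := (h01 i j).resolve_left hne
      have hsum : (2 : ℝ) ≤ ∑ k, S i k := by
        have hsub : ({j, f i} : Finset (Fin n)) ⊆ Finset.univ := Finset.subset_univ _
        have h2 : ∑ k ∈ ({j, f i} : Finset (Fin n)), S i k = 2 := by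
          rw [Finset.sum_pair hj, hSij, hf i]; norm_num
        calc (2:ℝ) = ∑ k ∈ ({j, f i} : Finset (Fin n)), S i k := h2.symm
          _ ≤ ∑ k, S i k := Finset.sum_le_sum_of_subset_of_nonneg hsub
              (fun k _ _ => hpos i k)
      rw [hrow i] at hsum; norm_num at hsum
    have hinj : Function.Injective f := by
      intro i₁ i₂ hfi
      by_contra hne
      have hsum : (2 : ℝ) ≤ ∑ k, S k (f i₁) := by
        have h2 : ∑ k ∈ ({i₁, i₂} : Finset (Fin n)), S k (f i₁) = 2 := by
          rw [Finset.sum_pair hne, hf i₁]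
          rw [hfi, hf i₂]; norm_num
        calc (2:ℝ) = ∑ k ∈ ({i₁, i₂} : Finset (Fin n)), S k (f i₁) := h2.symm
          _ ≤ ∑ k, S k (f i₁) := Finset.sum_le_sum_of_subset_of_nonneg
              (Finset.subset_univ _) (fun k _ _ => hpos k (f i₁))
      rw [hcol (f i₁)] at hsum; norm_num at hsum
    let σ : Equiv.Perm (Fin n) := Equiv.ofBijective f (Finite.injective_iff_bijective.mp hinj)
    have hσ : ∀ i, σ i = f i := fun i => rfl
    have hSP : S = σ.permMatrix ℝ := by
      ext i j
      rw [permMatrix_apply, hσ]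
      by_cases hj : f i = j
      · rw [if_pos hj, ← hj, hf i]
      · rw [if_neg hj]
        exact hrowunique i j (fun h => hj h.symm)
    refine ⟨σ, ?_⟩
    rw [← hSP, hSA, mul_assoc]
    have : S * Sᵀ = 1 := horth'
    rw [this, mul_one]
  · rintro ⟨σ, hσ⟩
    refine ⟨σ.permMatrix ℝ, ⟨?_, ?_, ?_⟩, ?_⟩
    · intro i j; rw [permMatrix_apply]; positivity
    · intro i
      simp only [permMatrix_apply]
      rw [Finset.sum_ite_eq Finset.univ (σ i) (fun _ => (1:ℝ))]
      simp
    · intro j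
      simp only [permMatrix_apply, Equiv.apply_eq_iff_eq_symm_apply]
      rw [Finset.sum_ite_eq' Finset.univ (σ.symm j) (fun _ => (1:ℝ))]
      simp
    · have horth : (σ.permMatrix ℝ) * (σ.permMatrix ℝ)ᵀ = 1 := by
        ext i k
        simp only [Matrix.mul_apply, Matrix.transpose_apply, permMatrix_apply]
        by_cases h : i = k
        · subst h
          simp [Finset.sum_ite_eq' Finset.univ (σ i), Matrix.one_apply]
        · rw [Matrix.one_apply_ne h]
          apply Finset.sum_eq_zero
          intro x _
          by_cases h1 : σ i = x
          · have : ¬ σ k = x := fun hc => h (σ.injective (h1.trans hc.symm))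
            rw [if_neg this, mul_zero]
          · rw [if_neg h1, zero_mul]
      calc σ.permMatrix ℝ * A = σ.permMatrix ℝ * A * 1 := by rw [mul_one]
        _ = σ.permMatrix ℝ * A * ((σ.permMatrix ℝ)ᵀ * σ.permMatrix ℝ) := by
            rw [mul_eq_one_comm.mp horth]
        _ = (σ.permMatrix ℝ * A * (σ.permMatrix ℝ)ᵀ) * σ.permMatrix ℝ := by
            noncomm_ring
        _ = B * σ.permMatrix ℝ := by rw [hσ]
end

section
/- Let G be a simple graph on n vertices with real adjacency matrix A, Ā = J − I − A the adjacency matrix of its complement, and let t be a nonzero real number such that I − tA is invertible and det(t⁻¹I − A) ≠ 0. Then 𝟙ᵀ(I − tA)⁻¹𝟙 = (1/t) · ( det((−t⁻¹ − 1)I − Ā) / ((−1)ⁿ det(t⁻¹I − A)) − 1 ). In particular, the generating function of the total walk counts 𝟙ᵀAʳ𝟙 is determined by the characteristic polynomial of A and that of Ā. -/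
open Matrix

/-- For a graph `G` with adjacency matrix `A`, complement adjacency matrix
`Ā = J - I - A`, and nonzero `t` with `I - tA` invertible and `det(t⁻¹I - A) ≠ 0`,
the walk generating function satisfies
`𝟙ᵀ(I - tA)⁻¹𝟙 = (1/t) (det((-t⁻¹-1)I - Ā) / ((-1)ⁿ det(t⁻¹I - A)) - 1)`. -/
theorem walk_generating_function_eq {n : ℕ}
    (G : SimpleGraph (Fin n)) [DecidableRel G.Adj] (t : ℝ) (ht : t ≠ 0)
    (hinv : IsUnit ((1 : Matrix (Fin n) (Fin n) ℝ) - t • G.adjMatrix ℝ))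
    (hdet : (t⁻¹ • (1 : Matrix (Fin n) (Fin n) ℝ) - G.adjMatrix ℝ).det ≠ 0) :
    (1 : Fin n → ℝ) ⬝ᵥ
        (((1 : Matrix (Fin n) (Fin n) ℝ) - t • G.adjMatrix ℝ)⁻¹ *ᵥ (1 : Fin n → ℝ)) =
      (1 / t) *
        (((-t⁻¹ - 1) • (1 : Matrix (Fin n) (Fin n) ℝ) -
            (allOnes n - 1 - G.adjMatrix ℝ)).det /
          ((-1 : ℝ) ^ n *
            (t⁻¹ • (1 : Matrix (Fin n) (Fin n) ℝ) - G.adjMatrix ℝ).det) - 1) := by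
  set A := G.adjMatrix ℝ with hA
  set B := (1 : Matrix (Fin n) (Fin n) ℝ) - t • A with hBdef
  have hdetB : IsUnit B.det := (Matrix.isUnit_iff_isUnit_det B).mp hinv
  have hdetBne : B.det ≠ 0 := hdetB.ne_zero
  set s : ℝ := (1 : Fin n → ℝ) ⬝ᵥ (B⁻¹ *ᵥ (1 : Fin n → ℝ)) with hs
  -- matrix determinant lemma
  set u : Fin n → ℝ := t • (B⁻¹ *ᵥ (1 : Fin n → ℝ)) with hu
  have hBu : B *ᵥ u = t • (1 : Fin n → ℝ) := by
    rw [hu, Matrix.mulVec_smul, Matrix.mulVec_mulVec, Matrix.mul_nonsing_inv _ hdetB,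
      Matrix.one_mulVec]
  have hcolrow : Matrix.replicateCol (Fin 1) (t • (1 : Fin n → ℝ)) *
      Matrix.replicateRow (Fin 1) (1 : Fin n → ℝ) = t • allOnes n := by
    ext i j
    simp [Matrix.mul_apply, allOnes]
  have hfact : B + t • allOnes n
      = B * (1 + Matrix.replicateCol (Fin 1) u * Matrix.replicateRow (Fin 1) (1 : Fin n → ℝ)) := by
    rw [Matrix.mul_add, Matrix.mul_one, ← Matrix.mul_assoc, ← Matrix.replicateCol_mulVec, hBu, hcolrow]
  have key : (B + t • allOnes n).det = B.det * (1 + t * s) := by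
    rw [hfact, Matrix.det_mul, show Matrix.det (1 + Matrix.replicateCol (Fin 1) u * Matrix.replicateRow (Fin 1) (1 : Fin n → ℝ) :
      Matrix (Fin n) (Fin n) ℝ)
      = 1 + (1 : Fin n → ℝ) ⬝ᵥ u from Matrix.det_one_add_replicateCol_mul_replicateRow (ι := Fin 1) u 1]
    congr 1
    rw [hu, hs, dotProduct_smul, smul_eq_mul]
  -- rewrite the numerator matrix
  have hnum : ((-t⁻¹ - 1) • (1 : Matrix (Fin n) (Fin n) ℝ) - (allOnes n - 1 - A))
      = (-1 : ℝ) • (t⁻¹ • (B + t • allOnes n)) := by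
    ext i j
    simp [hBdef, allOnes, Matrix.sub_apply, Matrix.add_apply, Matrix.smul_apply,
      Matrix.one_apply, smul_eq_mul]
    by_cases h : i = j <;> simp [h] <;> field_simp <;> ring
  have hden : t⁻¹ • (1 : Matrix (Fin n) (Fin n) ℝ) - A = t⁻¹ • B := by
    ext i j
    simp [hBdef, Matrix.sub_apply, Matrix.smul_apply, smul_eq_mul]
    field_simp
  have htpow : (t⁻¹ : ℝ) ^ n ≠ 0 := pow_ne_zero _ (inv_ne_zero ht)
  rw [hnum, hden, Matrix.det_smul, Matrix.det_smul, Matrix.det_smul, key]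
  have hne : ((-1 : ℝ) ^ n) ≠ 0 := pow_ne_zero _ (by norm_num)
  simp only [Fintype.card_fin]
  field_simp
  ring
end
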